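/- arXiv:math/0401361 — 6 statements merged into one kernel-verified Lean document; each statement's English description precedes it below -/
import Mathlib

section
/- Let G and G' be colored graphs, let s ≥ 1, and let x₁,…,x_s be vertices of G and y₁,…,y_s vertices of G'. For I ⊆ {1,…,s} put X_I = {x_h : h ∈ I} and Y_I = {y_h : h ∈ I}. Suppose there exist i, j ∈ {1,…,s} and I ⊆ {1,…,s} such that x_i and x_j lie in the same X_I-flap F of G while y_i and y_j lie in two different Y_I-flaps of G'. Then there is a first-order formula φ(v₁,…,v_s) in the language of colored graphs, in which every quantifier is existential and whose quantifier rank is at most ⌈log₂ |F|⌉, such that φ(x₁,…,x_s) holds in G and φ(y₁,…,y_s) fails in G'. (Equivalently: in the Ehrenfeucht game on G and G' starting from the configuration (x₁,…,x_s), (y₁,…,y_s), Spoiler can win in at most ⌈log₂ |F|⌉ further moves, playing only in G.) -/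
namespace FOG

/-- First-order formulas over the vocabulary of (colored) graphs:
equality, adjacency `E`, and unary color predicates `C_i`.
Variables are indexed by natural numbers. -/
inductive Fml : Type
  | eq : ℕ → ℕ → Fml
  | adj : ℕ → ℕ → Fml
  | col : ℕ → ℕ → Fml
  | not : Fml → Fml
  | and : Fml → Fml → Fml
  | or : Fml → Fml → Fml
  | ex : ℕ → Fml → Fml
  | all : ℕ → Fml → Fml

namespace Fml

/-- Free variables of a formula. -/
def freeVars : Fml → Finset ℕ
  | eq i j => {i, j}
  | adj i j => {i, j}
  | col _ i => {i}
  | not φ => φ.freeVars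
  | and φ ψ => φ.freeVars ∪ ψ.freeVars
  | or φ ψ => φ.freeVars ∪ ψ.freeVars
  | ex x φ => φ.freeVars.erase x
  | all x φ => φ.freeVars.erase x

/-- Quantifier rank: maximum depth of nesting of quantifiers. -/
def qr : Fml → ℕ
  | eq _ _ => 0
  | adj _ _ => 0
  | col _ _ => 0
  | not φ => φ.qr
  | and φ ψ => max φ.qr ψ.qr
  | or φ ψ => max φ.qr ψ.qr
  | ex _ φ => φ.qr + 1
  | all _ φ => φ.qr + 1

/-- The formula uses only the vocabulary `{E, =}` (no color predicates). -/
def noColors : Fml → Prop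
  | eq _ _ => True
  | adj _ _ => True
  | col _ _ => False
  | not φ => φ.noColors
  | and φ ψ => φ.noColors ∧ ψ.noColors
  | or φ ψ => φ.noColors ∧ ψ.noColors
  | ex _ φ => φ.noColors
  | all _ φ => φ.noColors

/-- The set (here: list, with possible repetitions) of sequences of nested quantifiers,
`true` standing for `∃` and `false` for `∀`. -/
def nest : Fml → List (List Bool)
  | eq _ _ => [[]]
  | adj _ _ => [[]]
  | col _ _ => [[]]
  | not φ => φ.nest.map (List.map Bool.not)
  | and φ ψ => φ.nest ++ ψ.nest
  | or φ ψ => φ.nest ++ ψ.nest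
  | ex _ φ => φ.nest.map (List.cons true)
  | all _ φ => φ.nest.map (List.cons false)

/-- Number of alternations (occurrences of `∃∀` or `∀∃`) in a sequence of quantifiers. -/
def altCount : List Bool → ℕ
  | [] => 0
  | [_] => 0
  | a :: b :: l => (if a = b then 0 else 1) + altCount (b :: l)

/-- The alternation number of a formula. -/
def altNum (φ : Fml) : ℕ := (φ.nest.map altCount).foldr max 0

/-- A sentence is a formula with no free variables. -/
def IsSentence (φ : Fml) : Prop := φ.freeVars = ∅

/-- Satisfaction of a formula in a graph `G` with coloring `c` under assignment `ρ`. -/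
def Sat {V : Type*} (G : SimpleGraph V) (c : ℕ → V → Prop) (ρ : ℕ → V) : Fml → Prop
  | eq i j => ρ i = ρ j
  | adj i j => G.Adj (ρ i) (ρ j)
  | col k i => c k (ρ i)
  | not φ => ¬ Sat G c ρ φ
  | and φ ψ => Sat G c ρ φ ∧ Sat G c ρ ψ
  | or φ ψ => Sat G c ρ φ ∨ Sat G c ρ ψ
  | ex x φ => ∃ v : V, Sat G c (Function.update ρ x v) φ
  | all x φ => ∀ v : V, Sat G c (Function.update ρ x v) φ

/-- A formula is true on `(G, c)` if it is satisfied under every assignment. -/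
def TrueOn {V : Type*} (G : SimpleGraph V) (c : ℕ → V → Prop) (φ : Fml) : Prop :=
  ∀ ρ : ℕ → V, φ.Sat G c ρ

/-- A formula is false on `(G, c)` if it is satisfied under no assignment. -/
def FalseOn {V : Type*} (G : SimpleGraph V) (c : ℕ → V → Prop) (φ : Fml) : Prop :=
  ∀ ρ : ℕ → V, ¬ φ.Sat G c ρ

end Fml

/-- The trivial (empty) coloring, used to regard plain graphs as colored structures. -/
def noColoring {V : Type*} : ℕ → V → Prop := fun _ _ => False

/-- A sentence `φ` over `{E, =}` defines the (finite, nonempty) graph `G`: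
it is true on `G` and false on every finite graph non-isomorphic to `G`. -/
def Defines {V : Type} (G : SimpleGraph V) (φ : Fml) : Prop :=
  φ.IsSentence ∧ φ.noColors ∧ φ.TrueOn G noColoring ∧
    ∀ (W : Type) [Finite W] [Nonempty W] (H : SimpleGraph W),
      ¬ Nonempty (G ≃g H) → φ.FalseOn H noColoring

/-- `D(G,G')`: minimum quantifier rank of a sentence over `{E, =}` true on `G`
and false on `G'`. -/
noncomputable def distRank {V W : Type} (G : SimpleGraph V) (H : SimpleGraph W) : ℕ :=
  sInf {r | ∃ φ : Fml, φ.IsSentence ∧ φ.noColors ∧ φ.TrueOn G noColoring ∧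
    φ.FalseOn H noColoring ∧ φ.qr = r}

/-- `D^k(G,G')`: as `distRank`, restricted to sentences of alternation number `≤ k`. -/
noncomputable def distRankAlt (k : ℕ) {V W : Type} (G : SimpleGraph V) (H : SimpleGraph W) : ℕ :=
  sInf {r | ∃ φ : Fml, φ.IsSentence ∧ φ.noColors ∧ φ.altNum ≤ k ∧ φ.TrueOn G noColoring ∧
    φ.FalseOn H noColoring ∧ φ.qr = r}

/-- `D(G)`: minimum quantifier rank of a sentence defining `G`. -/
noncomputable def defRank {V : Type} (G : SimpleGraph V) : ℕ :=
  sInf {r | ∃ φ : Fml, Defines G φ ∧ φ.qr = r}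

/-- `D^k(G)`: as `defRank`, restricted to sentences of alternation number `≤ k`. -/
noncomputable def defRankAlt (k : ℕ) {V : Type} (G : SimpleGraph V) : ℕ :=
  sInf {r | ∃ φ : Fml, Defines G φ ∧ φ.altNum ≤ k ∧ φ.qr = r}

/-- A colored graph: a simple graph with unary color predicates, only finitely many
of which are nonempty. -/
structure ColoredGraph (V : Type*) where
  graph : SimpleGraph V
  color : ℕ → V → Prop
  finColors : {i : ℕ | ∃ v, color i v}.Finite

/-- Isomorphism of colored graphs: a graph isomorphism preserving all colors. -/
def CIso {V W : Type*} (A : ColoredGraph V) (B : ColoredGraph W) : Prop :=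
  ∃ f : A.graph ≃g B.graph, ∀ i v, A.color i v ↔ B.color i (f v)

/-- `F` is an `X`-flap of `G`: the vertex set of a connected component of `G - X`. -/
def IsFlap {V : Type*} (G : SimpleGraph V) (X : Set V) (F : Set V) : Prop :=
  ∃ C : (G.induce (Xᶜ : Set V)).ConnectedComponent, F = Subtype.val '' C.supp

/-- Two `X`-flaps are similar if the identity of `X` extends to an isomorphism
of the induced subgraphs `G[X ∪ F₁]` and `G[X ∪ F₂]`. -/
def SimilarFlaps {V : Type*} (G : SimpleGraph V) (X F₁ F₂ : Set V) : Prop :=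
  ∃ f : G.induce (X ∪ F₁) ≃g G.induce (X ∪ F₂),
    ∀ (x : V) (hx : x ∈ X), ((f ⟨x, Or.inl hx⟩ : ↥(X ∪ F₂)) : V) = x

/-- `H` is a minor of `G` (via branch sets). -/
def HasMinor {V W : Type*} (G : SimpleGraph V) (H : SimpleGraph W) : Prop :=
  ∃ B : W → Set V,
    (∀ w, (B w).Nonempty) ∧
    (∀ w, (G.induce (B w)).Connected) ∧
    (Pairwise fun w₁ w₂ => Disjoint (B w₁) (B w₂)) ∧
    (∀ w₁ w₂, H.Adj w₁ w₂ → ∃ u ∈ B w₁, ∃ v ∈ B w₂, G.Adj u v)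

/-- Planarity, via Wagner's characterization: no `K₅` and no `K₃,₃` minor. -/
def Planar {V : Type*} (G : SimpleGraph V) : Prop :=
  ¬ HasMinor G (⊤ : SimpleGraph (Fin 5)) ∧
  ¬ HasMinor G (completeBipartiteGraph (Fin 3) (Fin 3))

/-- Outerplanarity, via the minor characterization: no `K₄` and no `K₂,₃` minor. -/
def Outerplanar {V : Type*} (G : SimpleGraph V) : Prop :=
  ¬ HasMinor G (⊤ : SimpleGraph (Fin 4)) ∧
  ¬ HasMinor G (completeBipartiteGraph (Fin 2) (Fin 3))

/-- A graph is Hamiltonian if it has a cycle passing through all its vertices. -/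
def IsHam {V : Type*} (G : SimpleGraph V) : Prop :=
  ∃ (a : V) (p : G.Walk a a), p.IsCycle ∧ ∀ v : V, v ∈ p.support

/-- The smallest `h` such that `G` has no `K_h` minor. -/
noncomputable def hadwiger {V : Type*} (G : SimpleGraph V) : ℕ :=
  sInf {h : ℕ | ¬ HasMinor G (⊤ : SimpleGraph (Fin h))}

/-- A rotation system on `G`: a permutation of the darts fixing tails, whose
restriction to the darts at each vertex is a single cycle. -/
structure RotationSystem {V : Type*} (G : SimpleGraph V) where
  σ : Equiv.Perm G.Dart
  fst_fixed : ∀ d : G.Dart, (σ d).toProd.1 = d.toProd.1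
  vert_cycle : ∀ d d' : G.Dart, d.toProd.1 = d'.toProd.1 → σ.SameCycle d d'

/-- The dart-reversal involution as a permutation. -/
def dartFlip {V : Type*} (G : SimpleGraph V) : Equiv.Perm G.Dart :=
  ⟨SimpleGraph.Dart.symm, SimpleGraph.Dart.symm,
    fun d => SimpleGraph.Dart.symm_symm d, fun d => SimpleGraph.Dart.symm_symm d⟩

/-- Number of faces of the embedding given by a rotation system: the number of
orbits of the face permutation `σ ∘ α`. -/
noncomputable def numFaces {V : Type*} (G : SimpleGraph V) (rs : RotationSystem G) : ℕ :=
  Nat.card (Quotient (Setoid.mk (rs.σ * dartFlip G).SameCycle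
    ⟨fun _ => Equiv.Perm.SameCycle.refl _ _, Equiv.Perm.SameCycle.symm,
      Equiv.Perm.SameCycle.trans⟩))

/-- `G` (connected) is embeddable in the orientable surface of genus `g`:
by the Heffter–Edmonds principle, some rotation system has Euler genus at most `g`. -/
def GenusAtMost {V : Type*} (G : SimpleGraph V) (g : ℕ) : Prop :=
  ∃ rs : RotationSystem G,
    (2 : ℤ) - 2 * g ≤ (Nat.card V : ℤ) - Nat.card G.edgeSet + numFaces G rs

end FOG


namespace FOGAux
open FOG

/-- Conjunction of `z ≠ h` over `h ∈ l` (quantifier-free, purely propositional). -/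
def guard (z : ℕ) : List ℕ → Fml
  | [] => .eq z z
  | h :: t => .and (.not (.eq z h)) (guard z t)

lemma guard_sat {V : Type*} (G : SimpleGraph V) (c : ℕ → V → Prop) (ρ : ℕ → V) (z : ℕ) :
    ∀ l : List ℕ, Fml.Sat G c ρ (guard z l) ↔ ∀ h ∈ l, ρ z ≠ ρ h := by
  intro l
  induction l with
  | nil => simp [guard, Fml.Sat]
  | cons h t ih => simp [guard, Fml.Sat, ih]

lemma guard_qr (z : ℕ) : ∀ l : List ℕ, (guard z l).qr = 0 := by
  intro l
  induction l with
  | nil => rfl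
  | cons h t ih => simp [guard, Fml.qr, ih]

lemma guard_nest (z : ℕ) : ∀ (l : List ℕ), ∀ t ∈ (guard z l).nest, t = ([] : List Bool) := by
  intro l
  induction l with
  | nil => simp [guard, Fml.nest]
  | cons h tl ih =>
    intro t ht
    simp only [guard, Fml.nest, List.mem_append, List.mem_map] at ht
    rcases ht with ht | ht
    · simp only [Fml.nest, List.mem_map, List.mem_singleton] at ht
      obtain ⟨a, ha, rfl⟩ := ht; subst ha; rfl
    · exact ih t ht

lemma guard_fv (z : ℕ) : ∀ l : List ℕ, (guard z l).freeVars ⊆ insert z l.toFinset := by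
  intro l
  induction l with
  | nil => simp [guard, Fml.freeVars]
  | cons h t ih =>
    simp only [guard, Fml.freeVars]
    intro k hk
    simp only [Finset.mem_union, Finset.mem_insert, Finset.mem_singleton] at hk
    rcases hk with (rfl | rfl) | hk
    · simp
    · simp
    · have := ih hk
      simp only [Finset.mem_insert, List.mem_toFinset] at this ⊢
      tauto

/-- `delta s S n a b`: a purely existential formula asserting the existence of a walk
of length at most `2^n` from `v_a` to `v_b` whose internal vertices avoid `{v_h : h ∈ S}`. -/
noncomputable def delta (s : ℕ) (S : Finset ℕ) : ℕ → ℕ → ℕ → Fml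
  | 0, a, b => .or (.eq a b) (.adj a b)
  | n+1, a, b => .ex (s+n) (.and (guard (s+n) S.toList)
      (.and (delta s S n a (s+n)) (delta s S n (s+n) b)))

lemma delta_qr (s : ℕ) (S : Finset ℕ) : ∀ n a b, (delta s S n a b).qr ≤ n := by
  intro n
  induction n with
  | zero => intro a b; simp [delta, Fml.qr]
  | succ n ih =>
    intro a b
    simp only [delta, Fml.qr, guard_qr]
    have h1 := ih a (s+n)
    have h2 := ih (s+n) b
    omega

lemma delta_nest (s : ℕ) (S : Finset ℕ) :
    ∀ n a b, ∀ t ∈ (delta s S n a b).nest, ∀ x ∈ t, x = true := by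
  intro n
  induction n with
  | zero =>
    intro a b t ht
    simp only [delta, Fml.nest, List.mem_append, List.mem_singleton] at ht
    rcases ht with rfl | rfl <;> simp
  | succ n ih =>
    intro a b t ht
    simp only [delta, Fml.nest, List.mem_map, List.mem_append] at ht
    obtain ⟨t', ht', rfl⟩ := ht
    intro x hx
    simp only [List.mem_cons] at hx
    rcases hx with rfl | hx
    · rfl
    · rcases ht' with ht' | ht' | ht'
      · rw [guard_nest _ _ _ ht'] at hx; simp at hx
      · exact ih a (s+n) t' ht' x hx
      · exact ih (s+n) b t' ht' x hx

lemma delta_fv (s : ℕ) (S : Finset ℕ) :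
    ∀ n a b, (delta s S n a b).freeVars ⊆ insert a (insert b ↑S) := by
  intro n
  induction n with
  | zero =>
    intro a b
    simp only [delta, Fml.freeVars]
    intro k hk
    simp only [Finset.mem_union, Finset.mem_insert, Finset.mem_singleton] at hk ⊢
    tauto
  | succ n ih =>
    intro a b
    simp only [delta, Fml.freeVars]
    intro k hk
    simp only [Finset.mem_erase, Finset.mem_union] at hk
    obtain ⟨hkne, hk⟩ := hk
    simp only [Finset.mem_insert]
    rcases hk with hk | hk | hk
    · have := guard_fv _ _ hk
      simp only [Finset.mem_insert, List.mem_toFinset, Finset.mem_toList] at this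
      rcases this with rfl | h
      · exact absurd rfl hkne
      · exact Or.inr (Or.inr h)
    · have := ih a (s+n) hk
      simp only [Finset.mem_insert] at this
      rcases this with rfl | rfl | h
      · exact Or.inl rfl
      · exact absurd rfl hkne
      · exact Or.inr (Or.inr h)
    · have := ih (s+n) b hk
      simp only [Finset.mem_insert] at this
      rcases this with rfl | rfl | h
      · exact absurd rfl hkne
      · exact Or.inr (Or.inl rfl)
      · exact Or.inr (Or.inr h)

lemma sound {V : Type*} (G : SimpleGraph V) (c : ℕ → V → Prop) (s : ℕ) (S : Finset ℕ)
    (hS : ∀ h ∈ S, h < s) (B : Set V) :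
    ∀ (n a b : ℕ) (ρ : ℕ → V),
      (∀ w, w ∈ B ↔ ∃ h ∈ S, ρ h = w) →
      (a < s ∨ s + n ≤ a) → (b < s ∨ s + n ≤ b) →
      Fml.Sat G c ρ (delta s S n a b) →
      ∀ (u v : ↥(Bᶜ)), (u : V) = ρ a → (v : V) = ρ b → (G.induce Bᶜ).Reachable u v := by
  intro n
  induction n with
  | zero =>
    intro a b ρ hB ha hb hsat u v hu hv
    simp only [delta, Fml.Sat] at hsat
    rcases hsat with h | h
    · have : u = v := Subtype.ext (by rw [hu, hv, h])
      rw [this]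
    · have : (G.induce Bᶜ).Adj u v := by
        simp only [SimpleGraph.comap_adj, Function.Embedding.coe_subtype, hu, hv]
        exact h
      exact this.reachable
  | succ n ih =>
    intro a b ρ hB ha hb hsat u v hu hv
    simp only [delta, Fml.Sat] at hsat
    obtain ⟨z, hg, h1, h2⟩ := hsat
    have hzB : z ∉ B := by
      intro hz
      rw [hB] at hz
      obtain ⟨h, hhS, hh⟩ := hz
      have hne : h ≠ s + n := by have := hS h hhS; omega
      have := (guard_sat G c _ (s+n) S.toList).1 hg h (Finset.mem_toList.2 hhS)
      apply this
      rw [Function.update_self, Function.update_of_ne hne, hh]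
    have hB' : ∀ w, w ∈ B ↔ ∃ h ∈ S, Function.update ρ (s+n) z h = w := by
      intro w
      rw [hB w]
      constructor
      · rintro ⟨h, hhS, hh⟩
        exact ⟨h, hhS, by rw [Function.update_of_ne (by have := hS h hhS; omega)]; exact hh⟩
      · rintro ⟨h, hhS, hh⟩
        refine ⟨h, hhS, ?_⟩
        rw [Function.update_of_ne (by have := hS h hhS; omega : h ≠ s+n)] at hh
        exact hh
    have hane : a ≠ s + n := by omega
    have hbne : b ≠ s + n := by omega
    have key1 := ih a (s+n) _ hB' (by omega) (Or.inr le_rfl) h1 u ⟨z, hzB⟩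
      (by rw [Function.update_of_ne hane]; exact hu) (by rw [Function.update_self])
    have key2 := ih (s+n) b _ hB' (Or.inr le_rfl) (by omega) h2 ⟨z, hzB⟩ v
      (by rw [Function.update_self]) (by rw [Function.update_of_ne hbne]; exact hv)
    exact key1.trans key2

lemma walk_split {V : Type*} {G : SimpleGraph V} :
    ∀ (m k : ℕ) {u v : V} (p : G.Walk u v), p.length ≤ m + k →
      ∃ (z : V) (p₁ : G.Walk u z) (p₂ : G.Walk z v), p₁.length ≤ m ∧ p₂.length ≤ k := by
  intro m
  induction m with
  | zero =>
    intro k u v p hp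
    exact ⟨u, .nil, p, le_rfl, by simpa using hp⟩
  | succ m ih =>
    intro k u v p hp
    cases p with
    | nil => exact ⟨u, .nil, .nil, by simp, by simp⟩
    | cons h q =>
      obtain ⟨z, q1, q2, h1, h2⟩ := ih k q (by simp only [SimpleGraph.Walk.length_cons] at hp; omega)
      refine ⟨z, .cons h q1, q2, ?_, h2⟩
      simp only [SimpleGraph.Walk.length_cons]
      omega

lemma complete {V : Type*} (G : SimpleGraph V) (c : ℕ → V → Prop) (s : ℕ) (S : Finset ℕ)
    (hS : ∀ h ∈ S, h < s) (B : Set V) :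
    ∀ (n a b : ℕ) (ρ : ℕ → V),
      (∀ w, w ∈ B ↔ ∃ h ∈ S, ρ h = w) →
      (a < s ∨ s + n ≤ a) → (b < s ∨ s + n ≤ b) →
      ∀ (u v : ↥(Bᶜ)), (u : V) = ρ a → (v : V) = ρ b →
      ∀ p : (G.induce Bᶜ).Walk u v, p.length ≤ 2^n →
      Fml.Sat G c ρ (delta s S n a b) := by
  intro n
  induction n with
  | zero =>
    intro a b ρ hB ha hb u v hu hv p hp
    simp only [delta, Fml.Sat]
    cases p with
    | nil => exact Or.inl (by rw [← hu, ← hv])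
    | cons hadj q =>
      have hq0 : q.length = 0 := by
        simp only [SimpleGraph.Walk.length_cons] at hp; omega
      have hw := SimpleGraph.Walk.eq_of_length_eq_zero hq0
      subst hw
      right
      simp only [SimpleGraph.comap_adj, Function.Embedding.coe_subtype] at hadj
      rw [← hu, ← hv]
      exact hadj
  | succ n ih =>
    intro a b ρ hB ha hb u v hu hv p hp
    have h2 : p.length ≤ 2^n + 2^n := by
      rw [pow_succ, mul_two] at hp; exact hp
    obtain ⟨z, p1, p2, hl1, hl2⟩ := walk_split (2^n) (2^n) p h2
    simp only [delta, Fml.Sat]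
    refine ⟨(z : V), ?_, ?_, ?_⟩
    · rw [guard_sat]
      intro h hhl
      have hhS := Finset.mem_toList.1 hhl
      have hne : h ≠ s + n := by have := hS h hhS; omega
      rw [Function.update_self, Function.update_of_ne hne]
      intro hzh
      exact z.2 ((hB _).2 ⟨h, hhS, hzh.symm⟩)
    all_goals {
      first
      | refine ih a (s+n) _ ?_ (by omega) (Or.inr le_rfl) u z ?_ (by rw [Function.update_self]) p1 hl1
      | refine ih (s+n) b _ ?_ (Or.inr le_rfl) (by omega) z v (by rw [Function.update_self]) ?_ p2 hl2
      · intro w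
        rw [hB w]
        constructor
        · rintro ⟨h, hhS, hh⟩
          exact ⟨h, hhS, by rw [Function.update_of_ne (by have := hS h hhS; omega : h ≠ s+n)]; exact hh⟩
        · rintro ⟨h, hhS, hh⟩
          refine ⟨h, hhS, ?_⟩
          rw [Function.update_of_ne (by have := hS h hhS; omega : h ≠ s+n)] at hh
          exact hh
      · first
        | (rw [Function.update_of_ne (by omega : a ≠ s+n)]; exact hu)
        | (rw [Function.update_of_ne (by omega : b ≠ s+n)]; exact hv)
    }

end FOGAux

/-- (Lemma on connectivity.) If `x_i, x_j` lie in the same `X_I`-flap `F` of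
`G` while `y_i, y_j` lie in different `Y_I`-flaps of `G'`, then some purely existential
formula `φ(v₁,…,v_s)` of quantifier rank at most `⌈log₂ |F|⌉` holds on `(x₁,…,x_s)` in `G`
and fails on `(y₁,…,y_s)` in `G'`. -/
theorem flap_distinguishing (V W : Type) [Finite V] [Finite W]
    (G : FOG.ColoredGraph V) (G' : FOG.ColoredGraph W)
    (s : ℕ) (hs : 1 ≤ s) (x : Fin s → V) (y : Fin s → W)
    (i j : Fin s) (I : Set (Fin s)) (F : Set V)
    (hF : FOG.IsFlap G.graph (x '' I) F) (hxi : x i ∈ F) (hxj : x j ∈ F)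
    (Fi Fj : Set W)
    (hFi : FOG.IsFlap G'.graph (y '' I) Fi) (hFj : FOG.IsFlap G'.graph (y '' I) Fj)
    (hyi : y i ∈ Fi) (hyj : y j ∈ Fj) (hne : Fi ≠ Fj) :
    ∃ φ : FOG.Fml, φ.freeVars ⊆ Finset.range s ∧
      (∀ t ∈ φ.nest, ∀ b ∈ t, b = true) ∧
      (φ.qr : ℤ) ≤ ⌈Real.logb 2 (Nat.card F)⌉ ∧
      (∀ ρ : ℕ → V, (∀ k : Fin s, ρ k.val = x k) → φ.Sat G.graph G.color ρ) ∧
      (∀ ρ : ℕ → W, (∀ k : Fin s, ρ k.val = y k) → ¬ φ.Sat G'.graph G'.color ρ) := by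
  classical
  obtain ⟨C, hFC⟩ := hF
  obtain ⟨Ci, hFiC⟩ := hFi
  obtain ⟨Cj, hFjC⟩ := hFj
  set m := Nat.card F with hm
  set n := Nat.clog 2 m with hn
  set S : Finset ℕ := (Set.toFinite I).toFinset.image Fin.val with hSdef
  have hSmem : ∀ h, h ∈ S ↔ ∃ k ∈ I, (k : ℕ) = h := by
    intro h
    simp only [hSdef, Finset.mem_image, Set.Finite.mem_toFinset]
  have hS : ∀ h ∈ S, h < s := by
    intro h hh
    obtain ⟨k, _, rfl⟩ := (hSmem h).1 hh
    exact k.2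
  refine ⟨FOGAux.delta s S n i.1 j.1, ?_, FOGAux.delta_nest s S n i.1 j.1, ?_, ?_, ?_⟩
  · intro k hk
    have := FOGAux.delta_fv s S n i.1 j.1 hk
    simp only [Finset.mem_insert, Finset.mem_coe] at this
    rcases this with rfl | rfl | h
    · exact Finset.mem_range.2 i.2
    · exact Finset.mem_range.2 j.2
    · exact Finset.mem_range.2 (hS _ h)
  · have h1 : (FOGAux.delta s S n i.1 j.1).qr ≤ n := FOGAux.delta_qr s S n i.1 j.1
    have h2 : ⌈Real.logb 2 (m : ℝ)⌉ = (n : ℤ) := by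
      rw [show (2:ℝ) = ((2:ℕ):ℝ) by norm_num]
      rw [Real.ceil_logb_natCast (by positivity), Int.clog_natCast]
    rw [h2]
    exact_mod_cast h1
  · -- truth on G
    intro ρ hρ
    have hB : ∀ w, w ∈ x '' I ↔ ∃ h ∈ S, ρ h = w := by
      intro w
      constructor
      · rintro ⟨k, hk, rfl⟩
        exact ⟨k.1, (hSmem _).2 ⟨k, hk, rfl⟩, hρ k⟩
      · rintro ⟨h, hh, hw⟩
        obtain ⟨k, hk, rfl⟩ := (hSmem _).1 hh
        exact ⟨k, hk, by rw [← hρ k]; exact hw⟩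
    obtain ⟨ui, huiC, huival⟩ : ∃ ui ∈ C.supp, (ui : V) = x i := by
      rw [hFC] at hxi
      obtain ⟨ui, h1, h2⟩ := hxi
      exact ⟨ui, h1, h2⟩
    obtain ⟨uj, hujC, hujval⟩ : ∃ uj ∈ C.supp, (uj : V) = x j := by
      rw [hFC] at hxj
      obtain ⟨uj, h1, h2⟩ := hxj
      exact ⟨uj, h1, h2⟩
    have hreach : (G.graph.induce ((x '' I)ᶜ)).Reachable ui uj := by
      apply SimpleGraph.ConnectedComponent.exact
      rw [(SimpleGraph.ConnectedComponent.mem_supp_iff _ _).1 huiC,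
        (SimpleGraph.ConnectedComponent.mem_supp_iff _ _).1 hujC]
    obtain ⟨p⟩ := hreach
    have hnodup := p.bypass_isPath.support_nodup
    have hsub : ∀ w ∈ p.bypass.support, w ∈ C.supp := by
      intro w hw
      have hw' : w ∈ p.support := p.support_bypass_subset hw
      rw [SimpleGraph.Walk.mem_support_iff_exists_append] at hw'
      obtain ⟨q, r, _⟩ := hw'
      rw [SimpleGraph.ConnectedComponent.mem_supp_iff,
        ← (SimpleGraph.ConnectedComponent.mem_supp_iff _ _).1 huiC]
      exact (SimpleGraph.ConnectedComponent.sound q.reachable).symm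
    have hcard : p.bypass.support.length ≤ m := by
      have h1 : p.bypass.support.toFinset.card = p.bypass.support.length :=
        List.toFinset_card_of_nodup hnodup
      have hfin : (C.supp).Finite := Set.toFinite _
      have h2 : p.bypass.support.toFinset ⊆ hfin.toFinset := by
        intro w hw
        rw [Set.Finite.mem_toFinset]
        exact hsub w (List.mem_toFinset.1 hw)
      have h3 := Finset.card_le_card h2
      have h4 : hfin.toFinset.card = m := by
        rw [← Set.ncard_eq_toFinset_card _ hfin]
        have h5 : F.ncard = (C.supp).ncard := by
          rw [hFC]
          exact Set.ncard_image_of_injective _ Subtype.val_injective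
        rw [← h5, hm, Nat.card_coe_set_eq]
      omega
    have hlen : p.bypass.length ≤ 2^n := by
      have h6 : p.bypass.support.length = p.bypass.length + 1 :=
        SimpleGraph.Walk.length_support _
      have hm2 : m ≤ 2^n := Nat.le_pow_clog one_lt_two m
      omega
    exact FOGAux.complete G.graph G.color s S hS (x '' I) n i.1 j.1 ρ hB
      (Or.inl i.2) (Or.inl j.2) ui uj (by rw [huival, hρ i]) (by rw [hujval, hρ j])
      p.bypass hlen
  · -- falsity on G'
    intro ρ hρ hsat
    have hB : ∀ w, w ∈ y '' I ↔ ∃ h ∈ S, ρ h = w := by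
      intro w
      constructor
      · rintro ⟨k, hk, rfl⟩
        exact ⟨k.1, (hSmem _).2 ⟨k, hk, rfl⟩, hρ k⟩
      · rintro ⟨h, hh, hw⟩
        obtain ⟨k, hk, rfl⟩ := (hSmem _).1 hh
        exact ⟨k, hk, by rw [← hρ k]; exact hw⟩
    have hyiB : y i ∈ (y '' I)ᶜ := by
      rw [hFiC] at hyi
      obtain ⟨ui, _, h2⟩ := hyi
      rw [← h2]
      exact ui.2
    have hyjB : y j ∈ (y '' I)ᶜ := by
      rw [hFjC] at hyj
      obtain ⟨uj, _, h2⟩ := hyj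
      rw [← h2]
      exact uj.2
    have hreach := FOGAux.sound G'.graph G'.color s S hS (y '' I) n i.1 j.1 ρ hB
      (Or.inl i.2) (Or.inl j.2) hsat ⟨y i, hyiB⟩ ⟨y j, hyjB⟩ (hρ i).symm (hρ j).symm
    apply hne
    have h1 : (G'.graph.induce ((y '' I)ᶜ)).connectedComponentMk ⟨y i, hyiB⟩ = Ci := by
      rw [hFiC] at hyi
      obtain ⟨ui, h1, h2⟩ := hyi
      have he : ui = ⟨y i, hyiB⟩ := Subtype.ext h2
      rw [← he]
      exact (SimpleGraph.ConnectedComponent.mem_supp_iff _ _).1 h1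
    have h2 : (G'.graph.induce ((y '' I)ᶜ)).connectedComponentMk ⟨y j, hyjB⟩ = Cj := by
      rw [hFjC] at hyj
      obtain ⟨uj, h1, h2⟩ := hyj
      have he : uj = ⟨y j, hyjB⟩ := Subtype.ext h2
      rw [← he]
      exact (SimpleGraph.ConnectedComponent.mem_supp_iff _ _).1 h1
    have h3 := SimpleGraph.ConnectedComponent.sound hreach
    rw [hFiC, hFjC, ← h1, ← h2, h3]
end

section
/- Let d ≥ 1 be an integer, let G be a connected graph whose maximum vertex degree is at most d, and let X ⊆ V(G). Then every collection of pairwise distinct, pairwise similar X-flaps of G has at most d members. -/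
/-- In a connected graph of maximum degree at most `d`, every collection of
pairwise similar `X`-flaps has at most `d` members. -/
theorem similar_flaps_bound (d : ℕ) (hd : 1 ≤ d) (V : Type) [Finite V]
    (G : SimpleGraph V) (hconn : G.Connected)
    (hdeg : ∀ v : V, Nat.card (G.neighborSet v) ≤ d) (X : Set V)
    (S : Set (Set V)) (hS : ∀ F ∈ S, FOG.IsFlap G X F)
    (hsim : S.Pairwise (FOG.SimilarFlaps G X)) :
    Nat.card S ≤ d := by
  classical
  -- distinct flaps are disjoint
  have hdisj : ∀ F ∈ S, ∀ F' ∈ S, F ≠ F' → Disjoint F F' := by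
    intro F hF F' hF' hne
    obtain ⟨C, rfl⟩ := hS F hF
    obtain ⟨C', rfl⟩ := hS F' hF'
    rw [Set.disjoint_left]
    rintro v ⟨⟨a, ha⟩, haS, rfl⟩ ⟨⟨b, hb⟩, hbS, hba⟩
    have : (⟨a, ha⟩ : ↥(Xᶜ)) = ⟨b, hb⟩ := Subtype.ext hba.symm
    apply hne
    have hCC : C = C' := by
      rw [← haS, ← hbS, this]
    rw [hCC]
  -- flaps are subsets of Xᶜ
  have hsub : ∀ F ∈ S, F ⊆ Xᶜ := by
    intro F hF
    obtain ⟨C, rfl⟩ := hS F hF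
    rintro v ⟨⟨a, ha⟩, _, rfl⟩
    exact ha
  by_cases hcard : Nat.card S ≤ 1
  · exact hcard.trans hd
  push_neg at hcard
  have hScard : 1 < S.ncard := by rwa [← Nat.card_coe_set_eq]
  obtain ⟨F₀, hF₀, F₁, hF₁, hne01⟩ := (Set.one_lt_ncard (Set.toFinite S)).mp hScard
  -- F₀ and F₁ are nonempty
  have hne : ∀ F ∈ S, F.Nonempty := by
    intro F hF
    obtain ⟨C, rfl⟩ := hS F hF
    obtain ⟨v, hv⟩ := C.exists_rep
    exact ⟨v, v, by rw [← hv]; rfl, rfl⟩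
  obtain ⟨u, hu⟩ := hne F₀ hF₀
  obtain ⟨v, hv⟩ := hne F₁ hF₁
  have hvnot : v ∉ F₀ := fun hvF₀ =>
    (Set.disjoint_left.mp (hdisj F₀ hF₀ F₁ hF₁ hne01) hvF₀) hv
  -- find x ∈ X adjacent to some a ∈ F₀
  obtain ⟨dart, _, hd1, hd2⟩ := ((hconn u v).some).exists_boundary_dart F₀ hu hvnot
  set a := dart.toProd.1 with ha_def
  set x := dart.toProd.2 with hx_def
  have hax : G.Adj a x := dart.adj
  have hxX : x ∈ X := by
    by_contra hxX
    obtain ⟨C₀, hC₀⟩ := hS F₀ hF₀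
    have haXc : a ∈ Xᶜ := hsub F₀ hF₀ hd1
    have hadj' : (G.induce (Xᶜ : Set V)).Adj ⟨a, haXc⟩ ⟨x, hxX⟩ := hax
    have haC : (⟨a, haXc⟩ : ↥(Xᶜ)) ∈ C₀.supp := by
      rw [hC₀] at hd1
      obtain ⟨w, hw, hwa⟩ := hd1
      have : w = ⟨a, haXc⟩ := Subtype.ext hwa
      rwa [← this]
    have hxC : (⟨x, hxX⟩ : ↥(Xᶜ)) ∈ C₀.supp := by
      rw [SimpleGraph.ConnectedComponent.mem_supp_iff] at haC ⊢
      rw [← haC]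
      exact SimpleGraph.ConnectedComponent.connectedComponentMk_eq_of_adj hadj'.symm
    exact hd2 (by rw [hC₀]; exact ⟨⟨x, hxX⟩, hxC, rfl⟩)
  -- every flap in S contains a neighbor of x
  have hkey : ∀ F ∈ S, ∃ y ∈ F, G.Adj x y := by
    intro F hF
    by_cases hFeq : F = F₀
    · exact ⟨a, hFeq ▸ hd1, hax.symm⟩
    obtain ⟨f, hfX⟩ := hsim hF₀ hF (Ne.symm hFeq)
    set a' : ↥(X ∪ F₀) := ⟨a, Or.inr hd1⟩ with ha'
    set x' : ↥(X ∪ F₀) := ⟨x, Or.inl hxX⟩ with hx'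
    have hadj0 : (G.induce (X ∪ F₀)).Adj x' a' := hax.symm
    have hadj1 : (G.induce (X ∪ F)).Adj (f x') (f a') := f.map_adj_iff.mpr hadj0
    have hfx : ((f x' : ↥(X ∪ F)) : V) = x := hfX x hxX
    refine ⟨(f a' : ↥(X ∪ F)), ?_, ?_⟩
    swap
    · have h3 : G.Adj ((f x' : ↥(X ∪ F)) : V) ((f a' : ↥(X ∪ F)) : V) := hadj1
      rwa [hfx] at h3
    rcases (f a').2 with hmem | hmem
    · exfalso
      -- f a' ∈ X leads to contradiction: then a ∈ X
      set z := ((f a' : ↥(X ∪ F)) : V) with hz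
      have h1 : f ⟨z, Or.inl hmem⟩ = f a' := by
        apply Subtype.ext
        rw [hfX z hmem]
      have h2 : (⟨z, Or.inl hmem⟩ : ↥(X ∪ F₀)) = a' := f.injective h1
      have : a ∈ X := by
        have := congrArg Subtype.val h2
        simp only [ha'] at this
        exact this ▸ hmem
      exact (hsub F₀ hF₀ hd1) this
    · exact hmem
  -- build an injection from S into the neighborhood of x
  have hchoice : ∀ F : ↥S, ∃ y : ↥(G.neighborSet x), (y : V) ∈ (F : Set V) := by
    rintro ⟨F, hF⟩
    obtain ⟨y, hyF, hxy⟩ := hkey F hF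
    exact ⟨⟨y, hxy⟩, hyF⟩
  choose g hg using hchoice
  have hginj : Function.Injective g := by
    rintro ⟨F, hF⟩ ⟨F', hF'⟩ hgFF
    ext1
    by_contra hneFF
    exact Set.disjoint_left.mp (hdisj F hF F' hF' hneFF) (hg ⟨F, hF⟩)
      (hgFF ▸ hg ⟨F', hF'⟩)
  exact (Nat.card_le_card_of_injective g hginj).trans (hdeg x)
end

section
/- For every n ≥ 2, the path P_n on n vertices is defined by a first-order sentence of alternation number at most 1 and quantifier rank strictly less than log₂ n + 3; that is, D¹(P_n) < log₂ n + 3. -/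
/-! A finite graph of finite diameter (hence connected) in which every vertex has degree at most 2
and some vertex `w` has degree at most 1 is a path: by induction on the distance, each sphere
around `w` has at most one vertex, so `x ↦ dist w x` is an isomorphism onto `P_N`, `N` the number
of vertices. Among such graphs, `P_n` is singled out by having diameter `n - 1`.

The degree conditions are a `∀`-sentence of rank 4 and an `∃∀`-sentence of rank 3. Splitting at a
midpoint at each existential quantifier expresses `dist(x, y) ≤ m` by an existential formula of
rank `⌈log₂ m⌉`, so "diameter `= n - 1`" is the conjunction of an `∃∃¬∃…` and a `∀∀∃…` sentence
of rank at most `⌈log₂ n⌉ + 2`. Rank 4 is too large for `n = 2`; there the degree-2 clause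
follows from the other two and is dropped. -/

namespace SimpleGraph

variable {V W : Type*} {G : SimpleGraph V} {H : SimpleGraph W}

lemma edist_le_add_iff {u v : V} {a b : ℕ} :
    G.edist u v ≤ (a + b : ℕ) ↔ ∃ z, G.edist u z ≤ a ∧ G.edist z v ≤ b := by
  constructor
  · intro h
    obtain ⟨p, hp⟩ := exists_walk_of_edist_ne_top (ne_top_of_le_ne_top (ENat.natCast_ne_top _) h)
    have hlen : p.length ≤ a + b := by rw [← hp] at h; exact_mod_cast h
    refine ⟨p.getVert a, (edist_le (p.take a)).trans ?_, (edist_le (p.drop a)).trans ?_⟩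
    · rw [Walk.take_length]; exact_mod_cast min_le_left _ _
    · rw [Walk.drop_length]; exact_mod_cast (by omega : p.length - a ≤ b)
  · rintro ⟨z, h₁, h₂⟩
    calc G.edist u v ≤ G.edist u z + G.edist z v := SimpleGraph.edist_triangle
      _ ≤ a + b := add_le_add h₁ h₂
      _ = (a + b : ℕ) := by push_cast; rfl

lemma Hom.edist_le (f : G →g H) (u v : V) : H.edist (f u) (f v) ≤ G.edist u v := by
  by_cases h : G.Reachable u v
  · obtain ⟨p, hp⟩ := h.exists_walk_length_eq_edist
    rw [← hp, ← p.length_map f]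
    exact SimpleGraph.edist_le _
  · rw [edist_eq_top_of_not_reachable h]
    exact le_top

lemma Iso.edist_eq (e : G ≃g H) (u v : V) : H.edist (e u) (e v) = G.edist u v :=
  le_antisymm (Hom.edist_le e.toHom u v) (by simpa using Hom.edist_le e.symm.toHom (e u) (e v))

lemma Iso.ediam_eq (e : G ≃g H) : H.ediam = G.ediam := by
  refine le_antisymm (ediam_le_iff.2 fun u v => ?_) (ediam_le_iff.2 fun u v => ?_)
  · rw [← e.apply_symm_apply u, ← e.apply_symm_apply v, e.edist_eq]
    exact edist_le_ediam
  · rw [← e.edist_eq]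
    exact edist_le_ediam

lemma Connected.dist_lt_card [Fintype V] (hG : G.Connected) (u v : V) :
    G.dist u v < Fintype.card V := by
  obtain ⟨p, hp, hlen⟩ := hG.exists_path_of_dist u v
  exact hlen ▸ hp.length_lt

lemma Connected.ediam_le_card_sub_one [Fintype V] (hG : G.Connected) :
    G.ediam ≤ (Fintype.card V - 1 : ℕ) :=
  ediam_le_iff.2 fun u v => by
    rw [← (hG.preconnected u v).coe_dist_eq_edist]
    exact_mod_cast Nat.le_sub_one_of_lt (hG.dist_lt_card u v)

def DegreeLeTwo (G : SimpleGraph V) : Prop :=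
  ∀ z a b c, G.Adj z a → G.Adj z b → G.Adj z c → a = b ∨ a = c ∨ b = c

lemma degreeLeTwo_of_ediam_le_one {w : V} (hw : (G.neighborSet w).Subsingleton)
    (hG : G.ediam ≤ 1) : G.DegreeLeTwo := by
  have adj_w : ∀ x, x ≠ w → G.Adj w x := fun x hx =>
    (edist_le_one_iff_adj_or_eq.1 (ediam_le_iff.1 hG w x)).resolve_right (Ne.symm hx)
  have key : ∀ x y, (x = w ↔ y = w) → x = y := fun x y h => by
    by_cases hx : x = w
    · exact hx.trans (h.1 hx).symm
    · exact hw (adj_w x hx) (adj_w y (mt h.2 hx))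
  intro z a b c _ _ _
  have := key a b; have := key a c; have := key b c
  tauto

lemma Connected.exists_adj_dist_eq_of_dist_eq_add_one (hG : G.Connected) {w x : V} {k : ℕ}
    (hx : G.dist w x = k + 1) : ∃ y, G.Adj x y ∧ G.dist w y = k := by
  obtain ⟨p, hp⟩ := hG.exists_walk_length_eq_dist x w
  rw [dist_comm, hx] at hp
  cases p with
  | nil => simp at hp
  | @cons _ y _ h q =>
    have hq : G.dist w y ≤ k := by
      rw [dist_comm]; exact (dist_le q).trans (by simp at hp; omega)
    refine ⟨_, h, ?_⟩
    rcases h.diff_dist_adj (u := w) with h' | h' | h' <;> omega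

theorem Connected.injective_dist_of_degreeLeTwo (hG : G.Connected) (hdeg : G.DegreeLeTwo)
    {w : V} (hw : (G.neighborSet w).Subsingleton) : Function.Injective (G.dist w) := by
  suffices ∀ k x y, G.dist w x = k → G.dist w y = k → x = y from
    fun x y h => this _ x y rfl h.symm
  intro k
  induction k with
  | zero =>
    intro x y hx hy
    rw [← hG.dist_eq_zero_iff.1 hx, hG.dist_eq_zero_iff.1 hy]
  | succ j ih =>
    intro x y hx hy
    obtain ⟨x', hxx', hx'⟩ := hG.exists_adj_dist_eq_of_dist_eq_add_one hx
    obtain ⟨y', hyy', hy'⟩ := hG.exists_adj_dist_eq_of_dist_eq_add_one hy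
    obtain rfl := ih x' y' hx' hy'
    cases j with
    | zero =>
      obtain rfl := hG.dist_eq_zero_iff.1 hx'
      exact hw hxx'.symm hyy'.symm
    | succ i =>
      obtain ⟨x'', hx'x'', hx''⟩ := hG.exists_adj_dist_eq_of_dist_eq_add_one hx'
      rcases hdeg x' x y x'' hxx'.symm hyy'.symm hx'x'' with h | rfl | rfl
      · exact h
      · omega
      · omega

theorem Connected.adj_iff_dist_add_one (hG : G.Connected) (hdeg : G.DegreeLeTwo) {w : V}
    (hw : (G.neighborSet w).Subsingleton) {x y : V} :
    G.Adj x y ↔ G.dist w x + 1 = G.dist w y ∨ G.dist w y + 1 = G.dist w x := by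
  have hinj := hG.injective_dist_of_degreeLeTwo hdeg hw
  constructor
  · intro h
    have hne : G.dist w x ≠ G.dist w y := hinj.ne h.ne
    rcases h.diff_dist_adj (u := w) with h' | h' | h' <;> omega
  · rintro (h | h)
    · obtain ⟨x', hx', hd⟩ := hG.exists_adj_dist_eq_of_dist_eq_add_one h.symm
      exact hinj hd ▸ hx'.symm
    · obtain ⟨y', hy', hd⟩ := hG.exists_adj_dist_eq_of_dist_eq_add_one h.symm
      exact hinj hd ▸ hy'

theorem Connected.nonempty_iso_pathGraph [Fintype V] (hG : G.Connected) (hdeg : G.DegreeLeTwo)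
    {w : V} (hw : (G.neighborSet w).Subsingleton) :
    Nonempty (G ≃g pathGraph (Fintype.card V)) := by
  let e : V → Fin (Fintype.card V) := fun x => ⟨G.dist w x, hG.dist_lt_card w x⟩
  have he : Function.Bijective e := (Fintype.bijective_iff_injective_and_card e).2
    ⟨fun x y h => hG.injective_dist_of_degreeLeTwo hdeg hw (Fin.mk.inj_iff.1 h), by simp⟩
  exact ⟨⟨Equiv.ofBijective e he, by
    simp [e, pathGraph_adj, hG.adj_iff_dist_add_one hdeg hw]⟩⟩

lemma degreeLeTwo_pathGraph (n : ℕ) : (pathGraph n).DegreeLeTwo := by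
  intro z a b c ha hb hc
  rw [pathGraph_adj] at ha hb hc
  simp only [Fin.ext_iff]
  omega

lemma pathGraph_neighborSet_zero_subsingleton (n : ℕ) :
    ((pathGraph (n + 1)).neighborSet 0).Subsingleton := by
  intro a ha b hb
  rw [mem_neighborSet, pathGraph_adj] at ha hb
  simp only [Fin.val_zero] at ha hb
  exact Fin.ext (by omega)

lemma le_add_length_of_walk_pathGraph {n : ℕ} {i j : Fin n} (p : (pathGraph n).Walk i j) :
    (j : ℕ) ≤ i + p.length := by
  induction p with
  | nil => simp
  | cons h _ ih =>
    rw [pathGraph_adj] at h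
    rw [Walk.length_cons]
    omega

lemma ediam_pathGraph (n : ℕ) : (pathGraph (n + 1)).ediam = n := by
  refine le_antisymm (by simpa using (pathGraph_connected n).ediam_le_card_sub_one) ?_
  obtain ⟨p, hp⟩ :=
    ((pathGraph_connected n).preconnected 0 (Fin.last n)).exists_walk_length_eq_edist
  calc (n : ℕ∞) ≤ p.length := by
        exact_mod_cast (by simpa using le_add_length_of_walk_pathGraph p)
    _ = _ := hp
    _ ≤ _ := edist_le_ediam

theorem nonempty_iso_pathGraph_of_ediam [Finite V] [Nonempty V] {n : ℕ} (hn : 1 ≤ n)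
    (hdeg : G.DegreeLeTwo) {w : V} (hw : (G.neighborSet w).Subsingleton)
    (hdiam : G.ediam = (n - 1 : ℕ)) : Nonempty (G ≃g pathGraph n) := by
  have := Fintype.ofFinite V
  have hG : G.Connected := connected_of_ediam_ne_top (by simp [hdiam])
  obtain ⟨e⟩ := hG.nonempty_iso_pathGraph hdeg hw
  obtain ⟨m, hm⟩ := Nat.exists_eq_succ_of_ne_zero (Fintype.card_ne_zero (α := V))
  rw [hm] at e
  have hmn : m = n - 1 := by
    have := e.ediam_eq
    rw [ediam_pathGraph, hdiam] at this
    exact_mod_cast this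
  exact ⟨(show n = m + 1 by omega) ▸ e⟩

end SimpleGraph

lemma Nat.clog_lt_logb_add_one {b n : ℕ} (hb : 1 < b) (hn : 1 ≤ n) :
    (Nat.clog b n : ℝ) < Real.logb b n + 1 := by
  rw [← Real.natCeil_logb_natCast]
  exact Nat.ceil_lt_add_one (Real.logb_nonneg (by exact_mod_cast hb) (by exact_mod_cast hn))

namespace FOG

open SimpleGraph

namespace Fml

def IsExistential (φ : Fml) : Prop := ∀ s ∈ φ.nest, ∀ q ∈ s, q = true

lemma altCount_eq_zero {c : Bool} : ∀ {l : List Bool}, (∀ q ∈ l, q = c) → altCount l = 0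
  | [], _ => rfl
  | [_], _ => rfl
  | a :: b :: l, h => by
    rw [altCount, if_pos ((h a (by simp)).trans (h b (by simp)).symm),
      altCount_eq_zero fun q hq => h q (List.mem_cons_of_mem a hq)]

lemma altCount_cons_le (a : Bool) : ∀ l : List Bool, altCount (a :: l) ≤ altCount l + 1
  | [] => by simp [altCount]
  | b :: l => by rw [altCount]; split <;> omega

lemma altCount_cons_cons_le_one (a : Bool) {c : Bool} {l : List Bool} (h : ∀ q ∈ l, q = c) :
    altCount (a :: a :: l) ≤ 1 := by
  rw [altCount, if_pos rfl, zero_add]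
  simpa [altCount_eq_zero h] using altCount_cons_le a l

lemma altNum_le_iff {φ : Fml} {k : ℕ} : φ.altNum ≤ k ↔ ∀ s ∈ φ.nest, altCount s ≤ k := by
  rw [altNum]
  induction φ.nest with
  | nil => simp
  | cons s l ih => simp [ih]

lemma altNum_and_le_iff {φ ψ : Fml} {k : ℕ} :
    (and φ ψ).altNum ≤ k ↔ φ.altNum ≤ k ∧ ψ.altNum ≤ k := by
  simp only [altNum_le_iff, nest, List.mem_append, or_imp, forall_and]

end Fml

/-- Variables from `v` on serve as bound variables, so `v` must exceed `x` and `y`. -/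
def distLE : ℕ → ℕ → ℕ → ℕ → Fml
  | 0, x, y, _ => .eq x y
  | 1, x, y, _ => .or (.eq x y) (.adj x y)
  | m + 2, x, y, v =>
    .ex v (.and (distLE ((m + 3) / 2) x v (v + 1)) (distLE ((m + 2) / 2) v y (v + 1)))
  termination_by m => m

lemma noColors_distLE (m x y v : ℕ) : (distLE m x y v).noColors := by
  fun_induction distLE m x y v <;> simp_all [Fml.noColors]

lemma freeVars_distLE (m x y v : ℕ) : (distLE m x y v).freeVars ⊆ {x, y} := by
  fun_induction distLE m x y v with
  | case1 | case2 => simp [Fml.freeVars]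
  | case3 m x y v ih₁ ih₂ =>
    intro a ha
    simp only [Fml.freeVars, Finset.mem_erase, Finset.mem_union] at ha
    rcases ha with ⟨hav, ha | ha⟩
    · have := ih₁ ha; simp_all
    · have := ih₂ ha; simp_all

lemma qr_distLE (m x y v : ℕ) : (distLE m x y v).qr ≤ Nat.clog 2 m := by
  fun_induction distLE m x y v with
  | case1 | case2 => simp [Fml.qr]
  | case3 m x y v ih₁ ih₂ =>
    have hmono : Nat.clog 2 ((m + 2) / 2) ≤ Nat.clog 2 ((m + 3) / 2) :=
      Nat.clog_mono_right 2 (by omega)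
    have hhalf : Nat.clog 2 (m + 2) = Nat.clog 2 ((m + 3) / 2) + 1 := by
      rw [Nat.clog_of_two_le one_lt_two (by omega),
        show (m + 2 + 2 - 1) / 2 = (m + 3) / 2 by omega]
    show max _ _ + 1 ≤ Nat.clog 2 (m + 2)
    omega

lemma isExistential_distLE (m x y v : ℕ) : (distLE m x y v).IsExistential := by
  fun_induction distLE m x y v with
  | case1 | case2 => simp [Fml.IsExistential, Fml.nest]
  | case3 m x y v ih₁ ih₂ =>
    simp only [Fml.IsExistential, Fml.nest, List.mem_map, List.mem_append] at *
    rintro _ ⟨s, hs, rfl⟩ q hq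
    rcases List.mem_cons.1 hq with rfl | hq
    · rfl
    · exact hs.elim (ih₁ s · q hq) (ih₂ s · q hq)

lemma sat_distLE {V : Type*} (G : SimpleGraph V) (c : ℕ → V → Prop) (m x y v : ℕ)
    (hx : x < v) (hy : y < v) (ρ : ℕ → V) :
    (distLE m x y v).Sat G c ρ ↔ G.edist (ρ x) (ρ y) ≤ m := by
  fun_induction distLE m x y v generalizing ρ with
  | case1 => simp [Fml.Sat]
  | case2 => simp [Fml.Sat, edist_le_one_iff_adj_or_eq, or_comm]
  | case3 m x y v ih₁ ih₂ =>
    have hm : m.succ.succ = (m + 3) / 2 + (m + 2) / 2 := by omega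
    simp only [Fml.Sat, ih₁ (by omega) (by omega), ih₂ (by omega) (by omega),
      Function.update_self, Function.update_of_ne hx.ne, Function.update_of_ne hy.ne]
    rw [hm, edist_le_add_iff]

def degLeTwoFml : Fml :=
  .all 0 (.all 1 (.all 2 (.all 3 (.or (.not (.and (.adj 0 1) (.and (.adj 0 2) (.adj 0 3))))
    (.or (.eq 1 2) (.or (.eq 1 3) (.eq 2 3)))))))

def leafFml : Fml :=
  .ex 0 (.all 1 (.all 2 (.or (.not (.and (.adj 0 1) (.adj 0 2))) (.eq 1 2))))

def diamFml (n : ℕ) : Fml :=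
  .and (.ex 0 (.ex 1 (.not (distLE (n - 2) 0 1 2)))) (.all 0 (.all 1 (distLE (n - 1) 0 1 2)))

def pathFml (n : ℕ) : Fml :=
  if n = 2 then .and leafFml (diamFml n) else .and degLeTwoFml (.and leafFml (diamFml n))

section Semantics

variable {V : Type*} (G : SimpleGraph V) (c : ℕ → V → Prop) (ρ : ℕ → V)

lemma sat_degLeTwoFml : degLeTwoFml.Sat G c ρ ↔ G.DegreeLeTwo := by
  simp only [degLeTwoFml, Fml.Sat, DegreeLeTwo]
  refine forall₄_congr fun z a b c => ?_
  simp only [Function.update, OfNat.zero_ne_ofNat, ↓reduceDIte, zero_ne_one, OfNat.one_ne_ofNat,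
    Nat.reduceEqDiff, not_and]
  tauto

lemma sat_leafFml : leafFml.Sat G c ρ ↔ ∃ w, (G.neighborSet w).Subsingleton := by
  simp only [leafFml, Fml.Sat, Set.Subsingleton, mem_neighborSet]
  refine exists_congr fun w => ⟨fun h a ha b hb => ?_, fun h a b => ?_⟩
  · simpa [Function.update, ha, hb] using h a b
  · by_cases hab : G.Adj w a ∧ G.Adj w b
    · simpa [Function.update] using Or.inr (h hab.1 hab.2)
    · simpa [Function.update] using Or.inl hab

lemma sat_diamFml {n : ℕ} (hn : 2 ≤ n) : (diamFml n).Sat G c ρ ↔ G.ediam = (n - 1 : ℕ) := by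
  obtain ⟨k, rfl⟩ : ∃ k, n = k + 2 := ⟨n - 2, by omega⟩
  simp only [diamFml, Fml.Sat, sat_distLE G c _ 0 1 2 (by norm_num) (by norm_num),
    Function.update_self, Function.update_of_ne one_ne_zero.symm, Nat.add_sub_cancel,
    show k + 2 - 1 = k + 1 by omega, ← not_forall]
  rw [← ediam_le_iff, ← ediam_le_iff, not_le, le_antisymm_iff, and_comm, Nat.cast_succ,
    ENat.add_one_le_iff (ENat.natCast_ne_top k)]

lemma sat_pathFml {n : ℕ} (hn : 2 ≤ n) :
    (pathFml n).Sat G c ρ ↔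
      G.DegreeLeTwo ∧ (∃ w, (G.neighborSet w).Subsingleton) ∧ G.ediam = (n - 1 : ℕ) := by
  unfold pathFml
  split_ifs with h2
  · subst h2
    simp only [Fml.Sat, sat_leafFml, sat_diamFml G c ρ le_rfl, iff_and_self]
    rintro ⟨⟨w, hw⟩, hdiam⟩
    exact degreeLeTwo_of_ediam_le_one hw hdiam.le
  · simp only [Fml.Sat, sat_degLeTwoFml, sat_leafFml, sat_diamFml G c ρ hn]

end Semantics

lemma isSentence_pathFml (n : ℕ) : (pathFml n).IsSentence := by
  have hdiam : (diamFml n).freeVars = ∅ := by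
    have h₁ := freeVars_distLE (n - 2) 0 1 2
    have h₂ := freeVars_distLE (n - 1) 0 1 2
    simp only [diamFml, Fml.freeVars, Finset.eq_empty_iff_forall_notMem, Finset.mem_union,
      Finset.mem_erase]
    rintro a (⟨h0, h1, ha⟩ | ⟨h0, h1, ha⟩)
    · simpa [h0, h1] using h₁ ha
    · simpa [h0, h1] using h₂ ha
  have hdeg : degLeTwoFml.freeVars = ∅ := by decide
  have hleaf : leafFml.freeVars = ∅ := by decide
  unfold pathFml Fml.IsSentence
  split_ifs <;> simp [Fml.freeVars, hdiam, hdeg, hleaf]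

lemma noColors_pathFml (n : ℕ) : (pathFml n).noColors := by
  unfold pathFml
  split_ifs <;> simp [Fml.noColors, diamFml, noColors_distLE, degLeTwoFml, leafFml]

lemma altNum_diamFml (n : ℕ) : (diamFml n).altNum ≤ 1 := by
  simp only [Fml.altNum_le_iff, diamFml, Fml.nest, List.mem_append, List.mem_map]
  rintro _ (⟨_, ⟨_, ⟨s, hs, rfl⟩, rfl⟩, rfl⟩ | ⟨_, ⟨s, hs, rfl⟩, rfl⟩)
  · refine Fml.altCount_cons_cons_le_one true (c := false) fun q hq => ?_
    obtain ⟨q, hq', rfl⟩ := List.mem_map.1 hq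
    simp [isExistential_distLE _ _ _ _ s hs q hq']
  · exact Fml.altCount_cons_cons_le_one false (isExistential_distLE _ _ _ _ s hs)

lemma altNum_pathFml (n : ℕ) : (pathFml n).altNum ≤ 1 := by
  have hdeg : degLeTwoFml.altNum ≤ 1 := by decide
  have hleaf : leafFml.altNum ≤ 1 := by decide
  unfold pathFml
  split_ifs <;> simp only [Fml.altNum_and_le_iff] <;> simp [*, altNum_diamFml]

lemma qr_pathFml {n : ℕ} (hn : 2 ≤ n) : (pathFml n).qr ≤ Nat.clog 2 n + 2 := by
  have hclog : 1 ≤ Nat.clog 2 n := Nat.clog_pos one_lt_two hn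
  have hdiam : (diamFml n).qr ≤ Nat.clog 2 n + 2 := by
    have h₁ := (qr_distLE (n - 2) 0 1 2).trans (Nat.clog_mono_right 2 (n.sub_le 2))
    have h₂ := (qr_distLE (n - 1) 0 1 2).trans (Nat.clog_mono_right 2 (n.sub_le 1))
    simp only [diamFml, Fml.qr]
    omega
  have hleaf : leafFml.qr = 3 := rfl
  have hdeg : degLeTwoFml.qr = 4 := rfl
  unfold pathFml
  split_ifs
  · simp only [Fml.qr]
    omega
  · have : 1 < Nat.clog 2 n := (Nat.lt_clog_iff_pow_lt one_lt_two).2 (by omega)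
    simp only [Fml.qr]
    omega

theorem defines_pathFml {n : ℕ} (hn : 2 ≤ n) : Defines (pathGraph n) (pathFml n) := by
  obtain ⟨m, rfl⟩ : ∃ m, n = m + 1 := ⟨n - 1, by omega⟩
  refine ⟨isSentence_pathFml _, noColors_pathFml _, fun ρ => ?_, ?_⟩
  · exact (sat_pathFml _ _ _ hn).2 ⟨degreeLeTwo_pathGraph _,
      ⟨0, pathGraph_neighborSet_zero_subsingleton m⟩, by simpa using ediam_pathGraph m⟩
  · intro W _ _ H hH ρ hsat
    obtain ⟨hdeg, ⟨w, hw⟩, hdiam⟩ := (sat_pathFml _ _ _ hn).1 hsat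
    exact hH ⟨(nonempty_iso_pathGraph_of_ediam (by omega) hdeg hw hdiam).some.symm⟩

end FOG

/-- For `n ≥ 2`, the path `P_n` is defined by a sentence of alternation
number at most 1 and quantifier rank less than `log₂ n + 3`. -/
theorem path_definability (n : ℕ) (hn : 2 ≤ n) :
    ∃ φ : FOG.Fml, FOG.Defines (SimpleGraph.pathGraph n) φ ∧ φ.altNum ≤ 1 ∧
      (φ.qr : ℝ) < Real.logb 2 n + 3 := by
  refine ⟨FOG.pathFml n, FOG.defines_pathFml hn, FOG.altNum_pathFml n, ?_⟩
  have hlog := Nat.clog_lt_logb_add_one (b := 2) one_lt_two (by omega : 1 ≤ n)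
  push_cast at hlog
  calc ((FOG.pathFml n).qr : ℝ) ≤ Nat.clog 2 n + 2 := by exact_mod_cast FOG.qr_pathFml hn
    _ < Real.logb 2 n + 3 := by linarith
end

section
/- For every n ≥ 3, the cycle C_n on n vertices is defined by a first-order sentence of quantifier rank strictly less than log₂ n + 3; that is, D(C_n) < log₂ n + 3. -/
/-!
A finite graph is `C_n` iff it is connected and `2`-regular, has diameter `⌊n/2⌋`, and each of
its vertices has exactly `1 + n % 2` vertices at distance `⌊n/2⌋`. Indeed the finite connected
`2`-regular graphs are the cycles `C_p`, and distance in `C_p` is the cyclic norm of the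
difference, so these conditions force `p = n`. "Distance at most `d`" is expressible with
quantifier rank `⌈log₂ d⌉` by recursively splitting a walk at its midpoint, so the conjunction
has rank at most `3 + max 1 ⌈log₂ ⌊n/2⌋⌉ < log₂ n + 3`.
-/

namespace SimpleGraph

variable {V W : Type*} {G : SimpleGraph V} {H : SimpleGraph W}

theorem edist_le_add_iff_s15 {x y : V} {s t : ℕ} :
    G.edist x y ≤ s + t ↔ ∃ z, G.edist x z ≤ s ∧ G.edist z y ≤ t := by
  constructor
  · intro h
    obtain ⟨w, hw⟩ := exists_walk_of_edist_ne_top (h.trans_lt (ENat.natCast_lt_top _)).ne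
    have hlen : w.length ≤ s + t := by exact_mod_cast hw ▸ h
    refine ⟨w.getVert s, (w.take s).edist_le.trans ?_, (w.drop s).edist_le.trans ?_⟩
    · simp
    · simp only [Walk.drop_length, Nat.cast_le]
      omega
  · rintro ⟨z, hxz, hzy⟩
    exact G.edist_triangle.trans (add_le_add hxz hzy)

theorem Hom.map_adj_iff_of_ncard_neighborSet_le [Finite W] (f : G →g H)
    (hf : Function.Injective f)
    (hdeg : ∀ v, (H.neighborSet (f v)).ncard ≤ (G.neighborSet v).ncard) {a b : V} :
    H.Adj (f a) (f b) ↔ G.Adj a b := by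
  refine ⟨fun h => ?_, f.map_adj⟩
  have hsub : f '' G.neighborSet a ⊆ H.neighborSet (f a) := by
    rintro _ ⟨b, hb, rfl⟩
    exact f.map_adj hb
  have himage := Set.eq_of_subset_of_ncard_le hsub
    (by rw [Set.ncard_image_of_injective _ hf]; exact hdeg a)
  obtain ⟨b', hb', hfb⟩ : f b ∈ f '' G.neighborSet a := himage ▸ h
  exact hf hfb ▸ hb'

theorem ncard_neighborSet_cycleGraph {p : ℕ} (hp : 3 ≤ p) (v : Fin p) :
    ((cycleGraph p).neighborSet v).ncard = 2 := by
  obtain ⟨q, rfl⟩ : ∃ q, p = q + 3 := ⟨p - 3, by omega⟩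
  rw [← coe_neighborFinset, Set.ncard_coe_finset, card_neighborFinset_eq_degree,
    cycleGraph_degree_three_le]

theorem Connected.exists_iso_cycleGraph [Finite V] (hconn : G.Connected)
    (hdeg : ∀ v, (G.neighborSet v).ncard = 2) :
    ∃ p, 3 ≤ p ∧ Nonempty (cycleGraph p ≃g G) := by
  classical
  have : Fintype V := Fintype.ofFinite V
  obtain ⟨v⟩ := hconn.nonempty
  obtain ⟨w, hw, hverts⟩ :=
    IsCycles.exists_cycle_toSubgraph_verts_eq_connectedComponentSupp
      (c := G.connectedComponentMk v) (fun u _ => hdeg u) rfl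
      (Set.nonempty_of_ncard_ne_zero (by simp [hdeg]))
  have hmem : ∀ u, u ∈ w.support.tail := fun u => by
    have : u ∈ w.toSubgraph.verts := by
      rw [hverts, ConnectedComponent.mem_supp_iff, ConnectedComponent.eq]
      exact hconn.preconnected u v
    rcases w.mem_support_iff.mp (w.mem_verts_toSubgraph.mp this) with rfl | h
    · exact Walk.end_mem_tail_support hw.not_nil
    · exact h
  -- `w` is a Hamiltonian cycle: the copy of `C_L` along it is onto by counting, and reflects
  -- adjacency since both graphs are `2`-regular.
  obtain ⟨f⟩ := (cycleGraph_isContained_iff hw.three_le_length).mpr ⟨v, w, hw, rfl⟩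
  have hcard : Nat.card V ≤ w.length :=
    calc Nat.card V = (Finset.univ : Finset V).card := by simp
      _ ≤ w.support.tail.toFinset.card :=
          Finset.card_le_card fun u _ => List.mem_toFinset.mpr (hmem u)
      _ ≤ w.support.tail.length := List.toFinset_card_le _
      _ = w.length := by simp
  have hbij : Function.Bijective f := f.injective.bijective_of_nat_card_le (by simpa using hcard)
  refine ⟨w.length, hw.three_le_length,
    ⟨{ toEquiv := Equiv.ofBijective f hbij, map_rel_iff' := ?_ }⟩⟩
  exact f.toHom.map_adj_iff_of_ncard_neighborSet_le f.injective fun u => by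
    rw [hdeg, ncard_neighborSet_cycleGraph hw.three_le_length]

end SimpleGraph

namespace FOG

open SimpleGraph

section CycleDistance

variable {p : ℕ}

def cyclicNorm (a : Fin p) : ℕ := min a.val (p - a.val)

theorem cyclicNorm_le_half (a : Fin p) : cyclicNorm a ≤ p / 2 := by
  unfold cyclicNorm
  omega

theorem cyclicNorm_neg [NeZero p] (a : Fin p) : cyclicNorm (-a) = cyclicNorm a := by
  have := a.isLt
  unfold cyclicNorm
  rw [Fin.val_neg]
  split_ifs with h
  · simp [h]
  · have : a.val ≠ 0 := Fin.val_ne_of_ne h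
    omega

theorem cyclicNorm_add_le (a b : Fin p) : cyclicNorm (a + b) ≤ cyclicNorm a + cyclicNorm b := by
  have := a.isLt
  have := b.isLt
  unfold cyclicNorm
  rw [Fin.val_add_eq_ite]
  split_ifs <;> omega

theorem exists_cyclicNorm_eq_half [NeZero p] : ∃ a : Fin p, cyclicNorm a = p / 2 :=
  ⟨⟨p / 2, Nat.div_lt_self (NeZero.pos p) one_lt_two⟩, by simp only [cyclicNorm]; omega⟩

theorem exists_ne_half_le_cyclicNorm_iff (hp : 1 < p) :
    (∃ a b : Fin p, a ≠ b ∧ p / 2 ≤ cyclicNorm a ∧ p / 2 ≤ cyclicNorm b) ↔ p % 2 = 1 := by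
  constructor
  · rintro ⟨a, b, hab, ha, hb⟩
    have := Fin.val_ne_of_ne hab
    have := a.isLt
    have := b.isLt
    unfold cyclicNorm at ha hb
    omega
  · intro hodd
    refine ⟨⟨p / 2, by omega⟩, ⟨p / 2 + 1, by omega⟩, by simp [Fin.ext_iff], ?_, ?_⟩ <;>
      simp only [cyclicNorm] <;> omega

theorem cyclicNorm_sub_le_of_adj [NeZero p] {u v : Fin p} (h : (cycleGraph p).Adj u v) :
    cyclicNorm (v - u) ≤ 1 := by
  rcases cycleGraph_adj'.mp h with h | h
  · rw [← neg_sub, cyclicNorm_neg]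
    exact (min_le_left _ _).trans h.le
  · exact (min_le_left _ _).trans h.le

theorem cyclicNorm_sub_le_length [NeZero p] {x y : Fin p} (w : (cycleGraph p).Walk x y) :
    cyclicNorm (y - x) ≤ w.length := by
  induction w with
  | nil => simp [cyclicNorm]
  | @cons u v y h w ih =>
    calc cyclicNorm (y - u) = cyclicNorm ((y - v) + (v - u)) := by rw [sub_add_sub_cancel]
      _ ≤ cyclicNorm (y - v) + cyclicNorm (v - u) := cyclicNorm_add_le _ _
      _ ≤ w.length + 1 := add_le_add ih (cyclicNorm_sub_le_of_adj h)
      _ = (Walk.cons h w).length := (Walk.length_cons _ _).symm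

theorem cycleGraph_adj_add_one [NeZero p] (hp : 1 < p) (u : Fin p) :
    (cycleGraph p).Adj u (u + 1) := by
  rw [cycleGraph_adj', add_sub_cancel_left, Fin.val_one', Nat.mod_eq_of_lt hp]
  exact Or.inr rfl

open Fin.NatCast in
theorem edist_cycleGraph_add_natCast_le [NeZero p] (hp : 1 < p) (x : Fin p) (d : ℕ) :
    (cycleGraph p).edist x (x + (d : Fin p)) ≤ d := by
  induction d with
  | zero => simp
  | succ d ih =>
    calc (cycleGraph p).edist x (x + ((d + 1 : ℕ) : Fin p))
        ≤ (cycleGraph p).edist x (x + (d : Fin p)) +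
            (cycleGraph p).edist (x + (d : Fin p)) (x + (d : Fin p) + 1) := by
          rw [Nat.cast_succ, ← add_assoc]
          exact SimpleGraph.edist_triangle
      _ ≤ d + 1 := add_le_add ih (edist_eq_one_iff_adj.mpr (cycleGraph_adj_add_one hp _)).le
      _ = (d + 1 : ℕ) := by push_cast; rfl

open Fin.NatCast in
theorem edist_cycleGraph [NeZero p] (hp : 1 < p) (x y : Fin p) :
    (cycleGraph p).edist x y = cyclicNorm (y - x) := by
  apply le_antisymm
  · have hup : (cycleGraph p).edist x y ≤ (y - x).val := by
      simpa using edist_cycleGraph_add_natCast_le hp x (y - x).val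
    have hdown : (cycleGraph p).edist x y ≤ (-(y - x)).val := by
      rw [edist_comm, neg_sub]
      simpa using edist_cycleGraph_add_natCast_le hp y (x - y).val
    rcases eq_or_ne (y - x) 0 with h | h
    · simpa [h, cyclicNorm] using hup
    · rw [Fin.val_neg, if_neg h] at hdown
      exact (le_min hup hdown).trans_eq Nat.mono_cast.map_min.symm
  · obtain ⟨w, hw⟩ := (cycleGraph_preconnected x y).exists_walk_length_eq_edist
    rw [← hw]
    exact_mod_cast cyclicNorm_sub_le_length w

end CycleDistance

namespace Fml

variable {V : Type*} {G : SimpleGraph V} {c : ℕ → V → Prop}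

theorem sat_comp_iso {W : Type*} {H : SimpleGraph W} (e : G ≃g H) {c' : ℕ → W → Prop}
    (hc : ∀ i v, c' i (e v) ↔ c i v) (φ : Fml) (ρ : ℕ → V) :
    φ.Sat H c' (e ∘ ρ) ↔ φ.Sat G c ρ := by
  induction φ generalizing ρ with
  | eq i j => simp [Sat]
  | adj i j => exact e.map_adj_iff
  | col k i => simp [Sat, hc]
  | not φ ih => simp [Sat, ih]
  | and φ ψ ihφ ihψ => simp [Sat, ihφ, ihψ]
  | or φ ψ ihφ ihψ => simp [Sat, ihφ, ihψ]
  | ex x φ ih =>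
    simp only [Sat]
    exact e.surjective.exists.trans (exists_congr fun v => by rw [← Function.comp_update, ih])
  | all x φ ih =>
    simp only [Sat]
    exact e.surjective.forall.trans (forall_congr' fun v => by rw [← Function.comp_update, ih])

/-- The midpoint of a walk is bound to `3 - x - y`, the third variable of `{0, 1, 2}`, so three
variables suffice. -/
def distLE : ℕ → ℕ → ℕ → Fml
  | 0, x, y => eq x y
  | 1, x, y => or (eq x y) (adj x y)
  | d + 2, x, y =>
    ex (3 - x - y) (and (distLE ((d + 3) / 2) x (3 - x - y)) (distLE ((d + 2) / 2) (3 - x - y) y))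

theorem qr_distLE (d x y : ℕ) : (distLE d x y).qr ≤ Nat.clog 2 d := by
  induction d using Nat.strong_induction_on generalizing x y with
  | _ d ih =>
    match d with
    | 0 | 1 => simp [distLE, qr]
    | d + 2 =>
      have h₁ := ih ((d + 3) / 2) (by omega) x (3 - x - y)
      have h₂ := ih ((d + 2) / 2) (by omega) (3 - x - y) y
      have hmono : Nat.clog 2 ((d + 2) / 2) ≤ Nat.clog 2 ((d + 3) / 2) :=
        Nat.clog_mono_right _ (by omega)
      have hclog : Nat.clog 2 (d + 2) = Nat.clog 2 ((d + 3) / 2) + 1 :=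
        Nat.clog_of_two_le (by norm_num) (by omega)
      simp only [distLE, qr]
      omega

theorem noColors_distLE (d x y : ℕ) : (distLE d x y).noColors := by
  induction d using Nat.strong_induction_on generalizing x y with
  | _ d ih =>
    match d with
    | 0 | 1 => simp [distLE, noColors]
    | d + 2 =>
      simp only [distLE, noColors]
      exact ⟨ih _ (by omega) _ _, ih _ (by omega) _ _⟩

theorem freeVars_distLE (d x y : ℕ) : (distLE d x y).freeVars ⊆ {x, y} := by
  induction d using Nat.strong_induction_on generalizing x y with
  | _ d ih =>
    match d with
    | 0 | 1 => simp [distLE, freeVars]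
    | d + 2 =>
      have h₁ := ih ((d + 3) / 2) (by omega) x (3 - x - y)
      have h₂ := ih ((d + 2) / 2) (by omega) (3 - x - y) y
      simp only [distLE, freeVars, ← Finset.subset_insert_iff, Finset.union_subset_iff]
      constructor
      · exact h₁.trans (by intro a; simp only [Finset.mem_insert, Finset.mem_singleton]; tauto)
      · exact h₂.trans (by intro a; simp only [Finset.mem_insert, Finset.mem_singleton]; tauto)

theorem sat_distLE (d : ℕ) {x y : ℕ} (hx : x < 3) (hy : y < 3) (hxy : x ≠ y) (ρ : ℕ → V) :
    (distLE d x y).Sat G c ρ ↔ G.edist (ρ x) (ρ y) ≤ d := by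
  induction d using Nat.strong_induction_on generalizing x y ρ with
  | _ d ih =>
    match d with
    | 0 => simp [distLE, Sat]
    | 1 => simp [distLE, Sat, edist_le_one_iff_adj_or_eq, or_comm]
    | d + 2 =>
      have hzx : 3 - x - y ≠ x := by omega
      have hzy : 3 - x - y ≠ y := by omega
      have hsplit : ((d + 2 : ℕ) : ℕ∞) = ((d + 3) / 2 : ℕ) + ((d + 2) / 2 : ℕ) := by
        rw [← Nat.cast_add]
        congr 1
        omega
      rw [hsplit, edist_le_add_iff_s15, distLE]
      simp only [Sat]
      refine exists_congr fun v => ?_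
      rw [ih _ (by omega) hx (by omega) hzx.symm, ih _ (by omega) (by omega) hy hzy,
        Function.update_of_ne hzx.symm, Function.update_of_ne hzy.symm, Function.update_self]

def degTwo : Fml :=
  all 0 (ex 1 (ex 2 (and (not (eq 1 2)) (and (adj 0 1) (and (adj 0 2)
    (all 3 (or (not (adj 0 3)) (or (eq 3 1) (eq 3 2)))))))))

def diamLE (d : ℕ) : Fml := all 0 (all 1 (distLE d 0 1))

def hasFar (d : ℕ) : Fml := ex 1 (not (distLE d 0 1))

def hasTwoFar (d : ℕ) : Fml :=
  ex 1 (ex 2 (and (not (eq 1 2)) (and (not (distLE d 0 1)) (not (distLE d 0 2)))))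

def cycleSentence (n : ℕ) : Fml :=
  and degTwo (and (diamLE (n / 2)) (all 0 (and (hasFar (n / 2 - 1))
    (if n % 2 = 1 then hasTwoFar (n / 2 - 1) else not (hasTwoFar (n / 2 - 1))))))

theorem sat_degTwo (ρ : ℕ → V) : degTwo.Sat G c ρ ↔ ∀ v, (G.neighborSet v).ncard = 2 := by
  simp only [degTwo, Sat, Function.update_apply, reduceIte, Nat.reduceEqDiff, Set.ncard_eq_two,
    Set.ext_iff, mem_neighborSet, Set.mem_insert_iff, Set.mem_singleton_iff]
  refine forall_congr' fun v => exists₂_congr fun a b => and_congr_right fun _ => ?_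
  grind

theorem sat_diamLE (d : ℕ) (ρ : ℕ → V) :
    (diamLE d).Sat G c ρ ↔ ∀ x y, G.edist x y ≤ d := by
  simp [diamLE, Sat, sat_distLE]

theorem sat_hasFar (d : ℕ) (ρ : ℕ → V) :
    (hasFar d).Sat G c ρ ↔ ∃ y, (d : ℕ∞) < G.edist (ρ 0) y := by
  simp [hasFar, Sat, sat_distLE]

theorem sat_hasTwoFar (d : ℕ) (ρ : ℕ → V) :
    (hasTwoFar d).Sat G c ρ ↔
      ∃ y z, y ≠ z ∧ (d : ℕ∞) < G.edist (ρ 0) y ∧ (d : ℕ∞) < G.edist (ρ 0) z := by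
  simp [hasTwoFar, Sat, sat_distLE]

theorem sat_cycleSentence (n : ℕ) (ρ : ℕ → V) :
    (cycleSentence n).Sat G c ρ ↔ (∀ v, (G.neighborSet v).ncard = 2) ∧
      (∀ x y, G.edist x y ≤ (n / 2 : ℕ)) ∧
      ∀ x, (∃ y, ((n / 2 - 1 : ℕ) : ℕ∞) < G.edist x y) ∧
        ((∃ y z, y ≠ z ∧ ((n / 2 - 1 : ℕ) : ℕ∞) < G.edist x y ∧
          ((n / 2 - 1 : ℕ) : ℕ∞) < G.edist x z) ↔ n % 2 = 1) := by
  simp only [cycleSentence, Sat, sat_degTwo, sat_diamLE]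
  refine and_congr_right fun _ => and_congr_right fun _ => forall_congr' fun x => ?_
  rw [sat_hasFar]
  split_ifs with h <;>
    simp only [Sat, sat_hasTwoFar, h, Function.update_self, iff_true, iff_false]

theorem isSentence_cycleSentence (n : ℕ) : (cycleSentence n).IsSentence := by
  have h₁ := freeVars_distLE (n / 2) 0 1
  have h₂ := freeVars_distLE (n / 2 - 1) 0 1
  have h₃ := freeVars_distLE (n / 2 - 1) 0 2
  rw [IsSentence, ← Finset.subset_empty]
  simp only [cycleSentence]
  split_ifs <;> simp only [degTwo, diamLE, hasFar, hasTwoFar, freeVars, Finset.union_subset_iff,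
      ← Finset.subset_insert_iff] <;>
    exact ⟨by decide, h₁.trans (by decide), h₂.trans (by decide), by decide, h₂.trans (by decide),
      h₃.trans (by decide)⟩

theorem noColors_cycleSentence (n : ℕ) : (cycleSentence n).noColors := by
  simp only [cycleSentence]
  split_ifs <;> simp [degTwo, diamLE, hasFar, hasTwoFar, noColors, noColors_distLE]

theorem qr_cycleSentence (n : ℕ) : (cycleSentence n).qr ≤ 3 + max 1 (Nat.clog 2 (n / 2)) := by
  have h₁ := qr_distLE (n / 2) 0 1
  have h₂ := qr_distLE (n / 2 - 1) 0 1
  have h₃ := qr_distLE (n / 2 - 1) 0 2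
  have hmono : Nat.clog 2 (n / 2 - 1) ≤ Nat.clog 2 (n / 2) := Nat.clog_mono_right _ (by omega)
  simp only [cycleSentence, degTwo, diamLE, hasFar, hasTwoFar, qr]
  split_ifs <;> simp only [qr] <;> omega

theorem sat_cycleSentence_cycleGraph_iff {n p : ℕ} (hn : 3 ≤ n) (hp : 3 ≤ p)
    (c : ℕ → Fin p → Prop) (ρ : ℕ → Fin p) :
    (cycleSentence n).Sat (cycleGraph p) c ρ ↔ p = n := by
  have : NeZero p := ⟨by omega⟩
  have hk : ∀ m, n / 2 - 1 < m ↔ n / 2 ≤ m := by omega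
  rw [sat_cycleSentence]
  simp only [edist_cycleGraph (by omega : 1 < p), Nat.cast_le, Nat.cast_lt, hk]
  constructor
  · rintro ⟨-, hdiam, hfar⟩
    obtain ⟨a, ha⟩ := exists_cyclicNorm_eq_half (p := p)
    have h₁ : cyclicNorm a ≤ n / 2 := by simpa using hdiam 0 a
    obtain ⟨⟨y, hy⟩, htwo⟩ := hfar 0
    have h₂ := cyclicNorm_le_half (y - 0)
    have hpn : p / 2 = n / 2 := by omega
    simp only [sub_zero, ← hpn, exists_ne_half_le_cyclicNorm_iff (by omega : 1 < p)] at htwo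
    omega
  · rintro rfl
    refine ⟨ncard_neighborSet_cycleGraph hp, fun x y => cyclicNorm_le_half _, fun x => ⟨?_, ?_⟩⟩
    · obtain ⟨a, ha⟩ := exists_cyclicNorm_eq_half (p := p)
      exact ⟨x + a, by rw [add_sub_cancel_left, ha]⟩
    · rw [← exists_ne_half_le_cyclicNorm_iff (by omega : 1 < p)]
      constructor
      · rintro ⟨y, z, hyz, hy, hz⟩
        exact ⟨y - x, z - x, sub_left_injective.ne hyz, hy, hz⟩
      · rintro ⟨a, b, hab, ha, hb⟩
        exact ⟨x + a, x + b, (add_right_injective x).ne hab, by rwa [add_sub_cancel_left],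
          by rwa [add_sub_cancel_left]⟩

end Fml

end FOG

theorem Nat.two_pow_max_one_clog_half_lt {n : ℕ} (hn : 3 ≤ n) :
    2 ^ max 1 (Nat.clog 2 (n / 2)) < n := by
  rcases le_or_gt (Nat.clog 2 (n / 2)) 1 with h | h
  · rw [max_eq_left h]
    omega
  · have hhalf : 1 < n / 2 := by
      by_contra! h'
      rw [Nat.clog_of_right_le_one h'] at h
      omega
    have hpred := Nat.pow_pred_clog_lt_self one_lt_two hhalf
    rw [max_eq_right h.le, ← Nat.succ_pred_eq_of_pos (by omega : 0 < Nat.clog 2 (n / 2)), pow_succ]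
    omega

theorem Real.natCast_lt_logb_of_pow_lt {b m n : ℕ} (hb : 1 < b) (h : b ^ m < n) :
    (m : ℝ) < Real.logb b n := by
  have hn : (0 : ℝ) < n := Nat.cast_pos.mpr (Nat.zero_le _ |>.trans_lt h)
  rw [Real.lt_logb_iff_rpow_lt (by exact_mod_cast hb) hn, Real.rpow_natCast]
  exact_mod_cast h

/-- For `n ≥ 3`, the cycle `C_n` is defined by a sentence of quantifier
rank less than `log₂ n + 3`. -/
theorem cycle_definability (n : ℕ) (hn : 3 ≤ n) :
    ∃ φ : FOG.Fml, FOG.Defines (SimpleGraph.cycleGraph n) φ ∧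
      (φ.qr : ℝ) < Real.logb 2 n + 3 := by
  refine ⟨FOG.Fml.cycleSentence n, ⟨FOG.Fml.isSentence_cycleSentence n,
    FOG.Fml.noColors_cycleSentence n,
    fun ρ => (FOG.Fml.sat_cycleSentence_cycleGraph_iff hn hn _ ρ).mpr rfl, ?_⟩, ?_⟩
  · intro W _ _ H hniso ρ hsat
    obtain ⟨hdeg, hdiam, -⟩ := (FOG.Fml.sat_cycleSentence n ρ).mp hsat
    have hconn : H.Connected := .mk fun x y => SimpleGraph.reachable_of_edist_ne_top
      (ne_top_of_le_ne_top (ENat.natCast_ne_top _) (hdiam x y))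
    obtain ⟨p, hp, ⟨e⟩⟩ := hconn.exists_iso_cycleGraph hdeg
    have hpn : p = n := (FOG.Fml.sat_cycleSentence_cycleGraph_iff hn hp _ (e.symm ∘ ρ)).mp
      ((FOG.Fml.sat_comp_iso e.symm (c' := FOG.noColoring) (fun _ _ => Iff.rfl) _ ρ).mpr hsat)
    exact hniso (hpn ▸ ⟨e⟩)
  · have hm := Real.natCast_lt_logb_of_pow_lt one_lt_two (Nat.two_pow_max_one_clog_half_lt hn)
    have hq : ((FOG.Fml.cycleSentence n).qr : ℝ) ≤ 3 + (max 1 (Nat.clog 2 (n / 2)) : ℕ) := by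
      exact_mod_cast FOG.Fml.qr_cycleSentence n
    rw [Nat.cast_ofNat] at hm
    linarith
end

section
/- For every n ≥ 2, D(K_{1,n−1}, K_{1,n}) = n; that is, the minimum quantifier rank of a first-order sentence true on the star with n−1 leaves and false on the star with n leaves equals n. -/
namespace StarProofAux

open FOG

/-- Vertex type of the star with `m` leaves. -/
abbrev SV (m : ℕ) := Fin 1 ⊕ Fin m
/-- The star graph with `m` leaves. -/
abbrev SG (m : ℕ) : SimpleGraph (SV m) := completeBipartiteGraph (Fin 1) (Fin m)
/-- The center of the star. -/
abbrev ctr (m : ℕ) : SV m := Sum.inl 0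

lemma adj_iff {m : ℕ} (u v : SV m) :
    (SG m).Adj u v ↔ ¬(u = ctr m ↔ v = ctr m) := by
  rcases u with u | u <;> rcases v with v | v
  · simp [completeBipartiteGraph, ctr, Subsingleton.elim u (0 : Fin 1),
      Subsingleton.elim v (0 : Fin 1)]
  · simp [completeBipartiteGraph, ctr, Subsingleton.elim u (0 : Fin 1)]
  · simp [completeBipartiteGraph, ctr, Subsingleton.elim v (0 : Fin 1)]
  · simp [completeBipartiteGraph, ctr]

/-- Duplicator's extension step. -/
lemma extend {a b : ℕ} (s : Finset ℕ) (ρ : ℕ → SV a) (ρ' : ℕ → SV b)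
    (h1 : ∀ i ∈ s, (ρ i = ctr a ↔ ρ' i = ctr b))
    (h2 : ∀ i ∈ s, ∀ j ∈ s, (ρ i = ρ j ↔ ρ' i = ρ' j))
    (hb : ((s.image ρ').erase (ctr b)).card < b) (v : SV a) :
    ∃ v' : SV b, (v = ctr a ↔ v' = ctr b) ∧ ∀ i ∈ s, (ρ i = v ↔ ρ' i = v') := by
  by_cases hv : v = ctr a
  · refine ⟨ctr b, by simp [hv], fun i hi => ?_⟩
    rw [hv]; exact h1 i hi
  · by_cases hex : ∃ i ∈ s, ρ i = v
    · obtain ⟨i0, hi0, hρ⟩ := hex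
      refine ⟨ρ' i0, ?_, fun i hi => ?_⟩
      · rw [← hρ]; exact h1 i0 hi0
      · rw [← hρ]; exact h2 i hi i0 hi0
    · push_neg at hex
      have hk : ∃ k : Fin b, Sum.inr k ∉ s.image ρ' := by
        by_contra hall
        push_neg at hall
        have hsub : (Finset.univ.image (Sum.inr : Fin b → SV b)) ⊆
            (s.image ρ').erase (ctr b) := by
          intro y hy
          obtain ⟨k, _, rfl⟩ := Finset.mem_image.mp hy
          exact Finset.mem_erase.mpr ⟨by simp [ctr], hall k⟩
        have hcard := Finset.card_le_card hsub
        rw [Finset.card_image_of_injective _ Sum.inr_injective, Finset.card_univ,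
          Fintype.card_fin] at hcard
        omega
      obtain ⟨k, hk⟩ := hk
      refine ⟨Sum.inr k, ?_, fun i hi => ?_⟩
      · constructor
        · intro h; exact absurd h hv
        · intro h; simp [ctr] at h
      · constructor
        · intro h; exact absurd h (hex i hi)
        · intro h; exact absurd (Finset.mem_image.mpr ⟨i, hi, h⟩) hk

lemma extend' {a b : ℕ} (x : ℕ) (φ : FOG.Fml) (ρ : ℕ → SV a) (ρ' : ℕ → SV b)
    (h1 : ∀ i ∈ φ.freeVars.erase x, (ρ i = ctr a ↔ ρ' i = ctr b))
    (h2 : ∀ i ∈ φ.freeVars.erase x, ∀ j ∈ φ.freeVars.erase x, (ρ i = ρ j ↔ ρ' i = ρ' j))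
    (hb : (((φ.freeVars.erase x).image ρ').erase (ctr b)).card < b) (v : SV a) :
    ∃ v' : SV b,
      (∀ i ∈ φ.freeVars,
        (Function.update ρ x v i = ctr a ↔ Function.update ρ' x v' i = ctr b)) ∧
      (∀ i ∈ φ.freeVars, ∀ j ∈ φ.freeVars,
        (Function.update ρ x v i = Function.update ρ x v j ↔
          Function.update ρ' x v' i = Function.update ρ' x v' j)) := by
  obtain ⟨v', hvc, hm⟩ := extend (φ.freeVars.erase x) ρ ρ' h1 h2 hb v
  refine ⟨v', fun i hi => ?_, fun i hi j hj => ?_⟩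
  · by_cases hix : i = x
    · subst hix; simpa using hvc
    · rw [Function.update_of_ne hix, Function.update_of_ne hix]
      exact h1 i (Finset.mem_erase.mpr ⟨hix, hi⟩)
  · by_cases hix : i = x <;> by_cases hjx : j = x
    · subst hix; subst hjx; simp
    · subst hix
      rw [Function.update_self, Function.update_self,
        Function.update_of_ne hjx, Function.update_of_ne hjx]
      exact eq_comm.trans ((hm j (Finset.mem_erase.mpr ⟨hjx, hj⟩)).trans eq_comm)
    · subst hjx
      rw [Function.update_self, Function.update_self,
        Function.update_of_ne hix, Function.update_of_ne hix]
      exact hm i (Finset.mem_erase.mpr ⟨hix, hi⟩)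
    · rw [Function.update_of_ne hix, Function.update_of_ne hix,
        Function.update_of_ne hjx, Function.update_of_ne hjx]
      exact h2 i (Finset.mem_erase.mpr ⟨hix, hi⟩) j (Finset.mem_erase.mpr ⟨hjx, hj⟩)

lemma card_mono_sub {m : ℕ} {s t : Finset ℕ} (h : s ⊆ t) (ρ : ℕ → SV m) :
    ((s.image ρ).erase (ctr m)).card ≤ ((t.image ρ).erase (ctr m)).card :=
  Finset.card_le_card (Finset.erase_subset_erase _ (Finset.image_subset_image h))

lemma count_update {m : ℕ} (t : Finset ℕ) (x : ℕ) (ρ : ℕ → SV m) (v : SV m) :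
    ((t.image (Function.update ρ x v)).erase (ctr m)).card ≤
      (((t.erase x).image ρ).erase (ctr m)).card + 1 := by
  have hsub : (t.image (Function.update ρ x v)).erase (ctr m) ⊆
      insert v (((t.erase x).image ρ).erase (ctr m)) := by
    intro y hy
    obtain ⟨hyne, hy⟩ := Finset.mem_erase.mp hy
    obtain ⟨i, hi, rfl⟩ := Finset.mem_image.mp hy
    by_cases hix : i = x
    · subst hix; rw [Function.update_self]; exact Finset.mem_insert_self _ _
    · rw [Function.update_of_ne hix] at hyne ⊢
      exact Finset.mem_insert_of_mem (Finset.mem_erase.mpr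
        ⟨hyne, Finset.mem_image_of_mem _ (Finset.mem_erase.mpr ⟨hix, hi⟩)⟩)
  calc ((t.image (Function.update ρ x v)).erase (ctr m)).card
      ≤ (insert v (((t.erase x).image ρ).erase (ctr m))).card := Finset.card_le_card hsub
    _ ≤ (((t.erase x).image ρ).erase (ctr m)).card + 1 := Finset.card_insert_le _ _

/-- The Ehrenfeucht–Fraïssé transfer lemma between two stars. -/
lemma transfer (a b : ℕ) (φ : FOG.Fml) : φ.noColors →
    ∀ (ρ : ℕ → SV a) (ρ' : ℕ → SV b),
    (∀ i ∈ φ.freeVars, (ρ i = ctr a ↔ ρ' i = ctr b)) →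
    (∀ i ∈ φ.freeVars, ∀ j ∈ φ.freeVars, (ρ i = ρ j ↔ ρ' i = ρ' j)) →
    ((φ.freeVars.image ρ).erase (ctr a)).card + φ.qr ≤ a →
    ((φ.freeVars.image ρ').erase (ctr b)).card + φ.qr ≤ b →
    (FOG.Fml.Sat (SG a) FOG.noColoring ρ φ ↔ FOG.Fml.Sat (SG b) FOG.noColoring ρ' φ) := by
  induction φ with
  | eq i j =>
    intro _ ρ ρ' h1 h2 _ _
    simp only [FOG.Fml.Sat]
    exact h2 i (by simp [FOG.Fml.freeVars]) j (by simp [FOG.Fml.freeVars])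
  | adj i j =>
    intro _ ρ ρ' h1 h2 _ _
    simp only [FOG.Fml.Sat]
    rw [adj_iff, adj_iff,
      h1 i (by simp [FOG.Fml.freeVars]), h1 j (by simp [FOG.Fml.freeVars])]
  | col k i => intro hnc; exact absurd hnc (by simp [FOG.Fml.noColors])
  | not φ ih =>
    intro hnc ρ ρ' h1 h2 h3 h3'
    simp only [FOG.Fml.noColors] at hnc
    simp only [FOG.Fml.freeVars, FOG.Fml.qr] at h1 h2 h3 h3'
    simp only [FOG.Fml.Sat]
    rw [ih hnc ρ ρ' h1 h2 h3 h3']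
  | and φ ψ ih1 ih2 =>
    intro hnc ρ ρ' h1 h2 h3 h3'
    obtain ⟨hnc1, hnc2⟩ := hnc
    simp only [FOG.Fml.freeVars, FOG.Fml.qr] at h1 h2 h3 h3'
    have s1 : φ.freeVars ⊆ φ.freeVars ∪ ψ.freeVars := Finset.subset_union_left
    have s2 : ψ.freeVars ⊆ φ.freeVars ∪ ψ.freeVars := Finset.subset_union_right
    have hq1 : φ.qr ≤ max φ.qr ψ.qr := le_max_left _ _
    have hq2 : ψ.qr ≤ max φ.qr ψ.qr := le_max_right _ _
    have e1 := ih1 hnc1 ρ ρ' (fun i hi => h1 i (s1 hi))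
      (fun i hi j hj => h2 i (s1 hi) j (s1 hj))
      (by have := card_mono_sub s1 ρ; omega) (by have := card_mono_sub s1 ρ'; omega)
    have e2 := ih2 hnc2 ρ ρ' (fun i hi => h1 i (s2 hi))
      (fun i hi j hj => h2 i (s2 hi) j (s2 hj))
      (by have := card_mono_sub s2 ρ; omega) (by have := card_mono_sub s2 ρ'; omega)
    simp only [FOG.Fml.Sat]
    rw [e1, e2]
  | or φ ψ ih1 ih2 =>
    intro hnc ρ ρ' h1 h2 h3 h3'
    obtain ⟨hnc1, hnc2⟩ := hnc
    simp only [FOG.Fml.freeVars, FOG.Fml.qr] at h1 h2 h3 h3'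
    have s1 : φ.freeVars ⊆ φ.freeVars ∪ ψ.freeVars := Finset.subset_union_left
    have s2 : ψ.freeVars ⊆ φ.freeVars ∪ ψ.freeVars := Finset.subset_union_right
    have hq1 : φ.qr ≤ max φ.qr ψ.qr := le_max_left _ _
    have hq2 : ψ.qr ≤ max φ.qr ψ.qr := le_max_right _ _
    have e1 := ih1 hnc1 ρ ρ' (fun i hi => h1 i (s1 hi))
      (fun i hi j hj => h2 i (s1 hi) j (s1 hj))
      (by have := card_mono_sub s1 ρ; omega) (by have := card_mono_sub s1 ρ'; omega)
    have e2 := ih2 hnc2 ρ ρ' (fun i hi => h1 i (s2 hi))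
      (fun i hi j hj => h2 i (s2 hi) j (s2 hj))
      (by have := card_mono_sub s2 ρ; omega) (by have := card_mono_sub s2 ρ'; omega)
    simp only [FOG.Fml.Sat]
    rw [e1, e2]
  | ex x φ ih =>
    intro hnc ρ ρ' h1 h2 h3 h3'
    simp only [FOG.Fml.noColors] at hnc
    simp only [FOG.Fml.freeVars, FOG.Fml.qr] at h1 h2 h3 h3'
    have key : ∀ (v : SV a) (v' : SV b),
        (∀ i ∈ φ.freeVars,
          (Function.update ρ x v i = ctr a ↔ Function.update ρ' x v' i = ctr b)) →
        (∀ i ∈ φ.freeVars, ∀ j ∈ φ.freeVars,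
          (Function.update ρ x v i = Function.update ρ x v j ↔
            Function.update ρ' x v' i = Function.update ρ' x v' j)) →
        (FOG.Fml.Sat (SG a) FOG.noColoring (Function.update ρ x v) φ ↔
          FOG.Fml.Sat (SG b) FOG.noColoring (Function.update ρ' x v') φ) := by
      intro v v' H1 H2
      exact ih hnc _ _ H1 H2
        (by have := count_update φ.freeVars x ρ v; omega)
        (by have := count_update φ.freeVars x ρ' v'; omega)
    simp only [FOG.Fml.Sat]
    constructor
    · rintro ⟨v, hv⟩
      obtain ⟨v', H1, H2⟩ := extend' x φ ρ ρ' h1 h2 (by omega) v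
      exact ⟨v', (key v v' H1 H2).mp hv⟩
    · rintro ⟨v', hv'⟩
      obtain ⟨v, H1, H2⟩ := extend' x φ ρ' ρ (fun i hi => (h1 i hi).symm)
        (fun i hi j hj => (h2 i hi j hj).symm) (by omega) v'
      exact ⟨v, (key v v' (fun i hi => (H1 i hi).symm)
        (fun i hi j hj => (H2 i hi j hj).symm)).mpr hv'⟩
  | all x φ ih =>
    intro hnc ρ ρ' h1 h2 h3 h3'
    simp only [FOG.Fml.noColors] at hnc
    simp only [FOG.Fml.freeVars, FOG.Fml.qr] at h1 h2 h3 h3'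
    have key : ∀ (v : SV a) (v' : SV b),
        (∀ i ∈ φ.freeVars,
          (Function.update ρ x v i = ctr a ↔ Function.update ρ' x v' i = ctr b)) →
        (∀ i ∈ φ.freeVars, ∀ j ∈ φ.freeVars,
          (Function.update ρ x v i = Function.update ρ x v j ↔
            Function.update ρ' x v' i = Function.update ρ' x v' j)) →
        (FOG.Fml.Sat (SG a) FOG.noColoring (Function.update ρ x v) φ ↔
          FOG.Fml.Sat (SG b) FOG.noColoring (Function.update ρ' x v') φ) := by
      intro v v' H1 H2
      exact ih hnc _ _ H1 H2
        (by have := count_update φ.freeVars x ρ v; omega)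
        (by have := count_update φ.freeVars x ρ' v'; omega)
    simp only [FOG.Fml.Sat]
    constructor
    · intro H v'
      obtain ⟨v, H1, H2⟩ := extend' x φ ρ' ρ (fun i hi => (h1 i hi).symm)
        (fun i hi j hj => (h2 i hi j hj).symm) (by omega) v'
      exact (key v v' (fun i hi => (H1 i hi).symm)
        (fun i hi j hj => (H2 i hi j hj).symm)).mp (H v)
    · intro H v
      obtain ⟨v', H1, H2⟩ := extend' x φ ρ ρ' h1 h2 (by omega) v
      exact (key v v' H1 H2).mpr (H v')

/-! ### The distinguishing sentence -/

open FOG.Fml in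
/-- `xi ≠ xj ∧ ¬ xi E xj`. -/
def pairF (i j : ℕ) : FOG.Fml := .and (.not (.eq i j)) (.not (.adj i j))

open FOG.Fml in
def guardF (j : ℕ) : ℕ → FOG.Fml
  | 0 => .eq j j
  | i + 1 => .and (guardF j i) (pairF i j)

open FOG.Fml in
def bodyF : ℕ → FOG.Fml
  | 0 => .eq 0 0
  | j + 1 => .and (bodyF j) (guardF j j)

open FOG.Fml in
def exChain : ℕ → FOG.Fml → FOG.Fml
  | 0, φ => φ
  | k + 1, φ => .ex k (exChain k φ)

lemma qr_guardF (j i : ℕ) : (guardF j i).qr = 0 := by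
  induction i with
  | zero => rfl
  | succ i ih => simp [guardF, FOG.Fml.qr, ih, pairF]

lemma qr_bodyF (m : ℕ) : (bodyF m).qr = 0 := by
  induction m with
  | zero => rfl
  | succ j ih => simp [bodyF, FOG.Fml.qr, ih, qr_guardF]

lemma qr_exChain (k : ℕ) (φ : FOG.Fml) : (exChain k φ).qr = φ.qr + k := by
  induction k with
  | zero => rfl
  | succ k ih => simp [exChain, FOG.Fml.qr, ih]; omega

lemma noColors_guardF (j i : ℕ) : (guardF j i).noColors := by
  induction i with
  | zero => trivial
  | succ i ih => exact ⟨ih, trivial, trivial⟩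

lemma noColors_bodyF (m : ℕ) : (bodyF m).noColors := by
  induction m with
  | zero => trivial
  | succ j ih => exact ⟨ih, noColors_guardF j j⟩

lemma noColors_exChain (k : ℕ) (φ : FOG.Fml) (h : φ.noColors) : (exChain k φ).noColors := by
  induction k with
  | zero => exact h
  | succ k ih => exact ih

lemma freeVars_guardF (j i : ℕ) :
    (guardF j i).freeVars ⊆ insert j (Finset.range i) := by
  induction i with
  | zero => simp [guardF, FOG.Fml.freeVars]
  | succ i ih =>
    simp only [guardF, pairF, FOG.Fml.freeVars]
    intro y hy
    simp only [Finset.mem_union] at hy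
    rcases hy with hy | hy
    · have := ih hy
      simp only [Finset.mem_insert, Finset.mem_range] at this ⊢
      omega
    · simp only [Finset.mem_union, Finset.mem_insert, Finset.mem_singleton] at hy
      simp only [Finset.mem_insert, Finset.mem_range]
      omega

lemma freeVars_bodyF (m : ℕ) : (bodyF m).freeVars ⊆ insert 0 (Finset.range m) := by
  induction m with
  | zero => simp [bodyF, FOG.Fml.freeVars]
  | succ j ih =>
    simp only [bodyF, FOG.Fml.freeVars]
    intro y hy
    simp only [Finset.mem_union] at hy
    rcases hy with hy | hy
    · have := ih hy
      simp only [Finset.mem_insert, Finset.mem_range] at this ⊢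
      omega
    · have := freeVars_guardF j j hy
      simp only [Finset.mem_insert, Finset.mem_range] at this ⊢
      omega

lemma freeVars_exChain (k : ℕ) (φ : FOG.Fml) :
    (exChain k φ).freeVars ⊆ φ.freeVars \ Finset.range k := by
  induction k with
  | zero => simp [exChain]
  | succ k ih =>
    simp only [exChain, FOG.Fml.freeVars]
    intro y hy
    obtain ⟨hyk, hy⟩ := Finset.mem_erase.mp hy
    have := ih hy
    simp only [Finset.mem_sdiff, Finset.mem_range] at this ⊢
    exact ⟨this.1, by omega⟩

lemma sat_guardF {V : Type*} (G : SimpleGraph V) (c : ℕ → V → Prop) (ρ : ℕ → V)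
    (j i : ℕ) : (guardF j i).Sat G c ρ ↔
      ∀ t < i, ρ t ≠ ρ j ∧ ¬ G.Adj (ρ t) (ρ j) := by
  induction i with
  | zero => simp [guardF, FOG.Fml.Sat]
  | succ i ih =>
    simp only [guardF, pairF, FOG.Fml.Sat, ih]
    constructor
    · rintro ⟨h, h1, h2⟩ t ht
      rcases Nat.lt_succ_iff_lt_or_eq.mp ht with ht | rfl
      · exact h t ht
      · exact ⟨h1, h2⟩
    · intro h
      exact ⟨fun t ht => h t (by omega), (h i (by omega)).1, (h i (by omega)).2⟩

lemma sat_bodyF {V : Type*} (G : SimpleGraph V) (c : ℕ → V → Prop) (ρ : ℕ → V)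
    (m : ℕ) : (bodyF m).Sat G c ρ ↔
      ∀ j < m, ∀ t < j, ρ t ≠ ρ j ∧ ¬ G.Adj (ρ t) (ρ j) := by
  induction m with
  | zero => simp [bodyF, FOG.Fml.Sat]
  | succ j ih =>
    simp only [bodyF, FOG.Fml.Sat, ih, sat_guardF]
    constructor
    · rintro ⟨h1, h2⟩ j' hj' t ht
      rcases Nat.lt_succ_iff_lt_or_eq.mp hj' with hj' | rfl
      · exact h1 j' hj' t ht
      · exact h2 t ht
    · intro h
      exact ⟨fun j' hj' t ht => h j' (by omega) t ht, fun t ht => h j (by omega) t ht⟩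

lemma sat_exChain_intro {V : Type*} (G : SimpleGraph V) (c : ℕ → V → Prop)
    (φ0 : FOG.Fml) (g : ℕ → V) :
    ∀ (k : ℕ) (ρ : ℕ → V),
      (FOG.Fml.Sat G c (fun i => if i < k then g i else ρ i) φ0) →
      FOG.Fml.Sat G c ρ (exChain k φ0) := by
  intro k
  induction k with
  | zero =>
    intro ρ h
    have : (fun i => if i < 0 then g i else ρ i) = ρ := funext fun i => by simp
    rwa [this] at h
  | succ k ih =>
    intro ρ h
    refine ⟨g k, ih (Function.update ρ k (g k)) ?_⟩
    have : (fun i => if i < k then g i else Function.update ρ k (g k) i) =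
        (fun i => if i < k + 1 then g i else ρ i) := by
      funext i
      by_cases h1 : i < k
      · rw [if_pos h1, if_pos (show i < k + 1 by omega)]
      · by_cases h2 : i = k
        · subst h2
          rw [if_neg h1, if_pos (by omega), Function.update_self]
        · rw [if_neg h1, if_neg (show ¬ i < k + 1 by omega), Function.update_of_ne h2]
    rwa [this]

lemma sat_exChain_elim {V : Type*} (G : SimpleGraph V) (c : ℕ → V → Prop)
    (φ0 : FOG.Fml) :
    ∀ (k : ℕ) (ρ : ℕ → V), FOG.Fml.Sat G c ρ (exChain k φ0) →
      ∃ τ : ℕ → V, (∀ i, k ≤ i → τ i = ρ i) ∧ FOG.Fml.Sat G c τ φ0 := by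
  intro k
  induction k with
  | zero => intro ρ h; exact ⟨ρ, fun _ _ => rfl, h⟩
  | succ k ih =>
    rintro ρ ⟨v, hv⟩
    obtain ⟨τ, hagree, hsat⟩ := ih (Function.update ρ k v) hv
    refine ⟨τ, fun i hi => ?_, hsat⟩
    rw [hagree i (by omega), Function.update_of_ne (by omega)]

/-- The sentence `¬∃ independent set of size n`. -/
def psiF (n : ℕ) : FOG.Fml := .not (exChain n (bodyF n))

lemma psiF_sentence (n : ℕ) (hn : 1 ≤ n) : (psiF n).IsSentence := by
  show (exChain n (bodyF n)).freeVars = ∅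
  apply Finset.eq_empty_of_forall_notMem
  intro x hx
  have h1 := freeVars_exChain n (bodyF n) hx
  rw [Finset.mem_sdiff] at h1
  have h2 := freeVars_bodyF n h1.1
  have h3 := h1.2
  simp only [Finset.mem_insert, Finset.mem_range] at h2 h3
  omega

lemma psiF_trueOn (n : ℕ) (hn : 2 ≤ n) :
    (psiF n).TrueOn (SG (n - 1)) FOG.noColoring := by
  intro ρ hsat
  obtain ⟨τ, _, hsat⟩ := sat_exChain_elim _ _ _ n ρ hsat
  rw [sat_bodyF] at hsat
  set f : Fin n → SV (n - 1) := fun t => τ t with hf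
  have hinj : Function.Injective f := by
    intro t j h
    by_contra hne
    have hne' : (t : ℕ) ≠ (j : ℕ) := fun he => hne (Fin.ext he)
    rcases Nat.lt_or_ge (t : ℕ) (j : ℕ) with hlt | hge
    · exact (hsat j j.isLt t hlt).1 h
    · exact (hsat t t.isLt j (by omega)).1 h.symm
  have hbij : Function.Bijective f := by
    rw [Fintype.bijective_iff_injective_and_card]
    refine ⟨hinj, ?_⟩
    simp [Fintype.card_sum]
    omega
  obtain ⟨t0, ht0⟩ := hbij.2 (ctr (n - 1))
  obtain ⟨t1, ht1⟩ := hbij.2 (Sum.inr ⟨0, by omega⟩)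
  have hne : (t0 : ℕ) ≠ (t1 : ℕ) := by
    intro he
    rw [Fin.ext he, ht1] at ht0
    simp [ctr] at ht0
  have hadj : (SG (n - 1)).Adj (f t0) (f t1) := by
    rw [adj_iff, ht0, ht1]
    simp [ctr]
  rcases Nat.lt_or_ge (t0 : ℕ) (t1 : ℕ) with hlt | hge
  · exact (hsat t1 t1.isLt t0 hlt).2 hadj
  · exact (hsat t0 t0.isLt t1 (by omega)).2 ((SG (n - 1)).adj_symm hadj)

lemma psiF_falseOn (n : ℕ) : (psiF n).FalseOn (SG n) FOG.noColoring := by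
  intro ρ hsat
  apply hsat
  apply sat_exChain_intro _ _ _ (fun i => if h : i < n then Sum.inr ⟨i, h⟩ else ctr n)
  rw [sat_bodyF]
  intro j hj t ht
  rw [if_pos (by omega : t < n), if_pos hj, dif_pos (by omega : t < n), dif_pos hj]
  constructor
  · intro h
    have : t = j := by simpa [Fin.ext_iff] using h
    omega
  · rw [adj_iff]
    simp [ctr]

lemma qr_psiF (n : ℕ) : (psiF n).qr = n := by
  show (exChain n (bodyF n)).qr = n
  rw [qr_exChain, qr_bodyF]; omega

end StarProofAux

/-- For `n ≥ 2`, `D(K_{1,n−1}, K_{1,n}) = n`. -/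
theorem star_distinguishing (n : ℕ) (hn : 2 ≤ n) :
    FOG.distRank (completeBipartiteGraph (Fin 1) (Fin (n - 1)))
      (completeBipartiteGraph (Fin 1) (Fin n)) = n := by
  classical
  open StarProofAux in
  have hmem : n ∈ {r | ∃ φ : FOG.Fml, φ.IsSentence ∧ φ.noColors ∧
      φ.TrueOn (completeBipartiteGraph (Fin 1) (Fin (n - 1))) FOG.noColoring ∧
      φ.FalseOn (completeBipartiteGraph (Fin 1) (Fin n)) FOG.noColoring ∧ φ.qr = n} := by
    refine ⟨StarProofAux.psiF n, StarProofAux.psiF_sentence n (by omega),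
      StarProofAux.noColors_exChain n _ (StarProofAux.noColors_bodyF n),
      StarProofAux.psiF_trueOn n hn, StarProofAux.psiF_falseOn n,
      StarProofAux.qr_psiF n⟩
  have hlow : ∀ r ∈ {r | ∃ φ : FOG.Fml, φ.IsSentence ∧ φ.noColors ∧
      φ.TrueOn (completeBipartiteGraph (Fin 1) (Fin (n - 1))) FOG.noColoring ∧
      φ.FalseOn (completeBipartiteGraph (Fin 1) (Fin n)) FOG.noColoring ∧ φ.qr = r},
      n ≤ r := by
    rintro r ⟨φ, hsent, hnc, htrue, hfalse, hqr⟩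
    by_contra hr
    push_neg at hr
    have hfv : φ.freeVars = ∅ := hsent
    have htrans := StarProofAux.transfer (n - 1) n φ hnc
      (fun _ => StarProofAux.ctr (n - 1)) (fun _ => StarProofAux.ctr n)
      (fun i hi => by rw [hfv] at hi; exact absurd hi (Finset.notMem_empty i))
      (fun i hi => by rw [hfv] at hi; exact absurd hi (Finset.notMem_empty i))
      (by rw [hfv]; simp; omega)
      (by rw [hfv]; simp; omega)
    exact hfalse _ (htrans.mp (htrue _))
  unfold FOG.distRank
  exact le_antisymm (Nat.sInf_le hmem) (hlow _ (Nat.sInf_mem ⟨n, hmem⟩))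
end

section
/- An outerplanar graph on at least 3 vertices is 2-connected if and only if it is Hamiltonian; that is, the 2-connected outerplanar graphs are precisely the Hamiltonian outerplanar graphs. -/
/-!
Deleting a vertex from a Hamiltonian cycle leaves a path through all remaining vertices,
which gives 2-connectivity. Conversely, let `C` be a longest cycle of a 2-connected graph and suppose a
vertex lies off `C`. Then some edge `xu` has `x` on `C` and `u` off it, and a path from `u` to
`C` avoiding `x` first meets `C` at some `y ≠ x`; with the edge `xu` it is an `x`–`y` path `P₃`
of length at least 2 meeting `C` only in `x` and `y`. Swapping either `x`–`y` arc of `C` for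
`P₃` gives a cycle, so by maximality both arcs are at least as long as `P₃`. The interiors of
the two arcs and of `P₃`, together with `{x}` and `{y}`, are then the branch sets of a
`K₂,₃` minor, which an outerplanar graph does not have.
-/

namespace SimpleGraph

variable {V : Type*} {G : SimpleGraph V}

namespace Walk

variable {u v x y w : V}

def InternallyDisjoint (p q : G.Walk x y) : Prop :=
  ∀ w ∈ p.support, w ∈ q.support → w = x ∨ w = y

theorem InternallyDisjoint.symm {p q : G.Walk x y} (h : p.InternallyDisjoint q) :
    q.InternallyDisjoint p :=
  fun w hq hp ↦ h w hp hq

theorem IsPath.start_notMem_support_tail {p : G.Walk u v} (hp : p.IsPath) :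
    u ∉ p.support.tail :=
  (List.nodup_cons.mp (p.cons_tail_support ▸ hp.support_nodup)).1

theorem IsPath.isCycle_append_reverse {p q : G.Walk x y} (hp : p.IsPath) (hq : q.IsPath)
    (hpq : p.InternallyDisjoint q) (hlen : 1 < p.length ∨ 1 < q.length) :
    (p.append q.reverse).IsCycle := by
  refine hp.isCycle_append ((isPath_reverse_iff q).mpr hq) (fun w hwp hwq ↦ ?_)
    (by rwa [length_reverse])
  have hwq' : w ∈ q.support := by
    simpa using List.mem_of_mem_tail hwq
  rcases hpq w (List.mem_of_mem_tail hwp) hwq' with rfl | rfl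
  · exact hp.start_notMem_support_tail hwp
  · exact ((isPath_reverse_iff q).mpr hq).start_notMem_support_tail hwq

theorem IsCycle.exists_isPath_internallyDisjoint {c : G.Walk v v} (hc : c.IsCycle)
    (hx : x ∈ c.support) (hy : y ∈ c.support) (hxy : x ≠ y) :
    ∃ p q : G.Walk x y, p.IsPath ∧ q.IsPath ∧ p.InternallyDisjoint q ∧
      p.length + q.length = c.length ∧ p.support ⊆ c.support ∧ q.support ⊆ c.support := by
  classical
  set c' := c.rotate x hx
  have hc' : c'.IsCycle := hc.rotate hx
  have hy' : y ∈ c'.support := (mem_support_rotate_iff c x hx).mpr hy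
  set p := c'.takeUntil y hy'
  set d := c'.dropUntil y hy'
  have hpd : p.append d = c' := c'.take_spec hy'
  have hd : d.IsPath :=
    (hpd ▸ hc' : (p.append d).IsCycle).isPath_of_append_right (not_nil_of_ne hxy)
  refine ⟨p, d.reverse, hc'.isPath_takeUntil hy', (isPath_reverse_iff d).mpr hd, ?_, ?_, ?_, ?_⟩
  · intro w hwp hwd
    rw [support_reverse, List.mem_reverse] at hwd
    by_contra! hw
    have hnodup := hc'.support_nodup
    rw [← hpd, tail_support_append, List.nodup_append'] at hnodup
    exact List.disjoint_left.mp hnodup.2.2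
      ((List.mem_cons.mp (p.cons_tail_support ▸ hwp)).resolve_left hw.1)
      ((List.mem_cons.mp (d.cons_tail_support ▸ hwd)).resolve_left hw.2)
  · rw [length_reverse, ← length_append, hpd, length_rotate]
  · intro w hw
    exact (mem_support_rotate_iff c x hx).mp (c'.support_takeUntil_subset_support hy' hw)
  · intro w hw
    rw [support_reverse, List.mem_reverse] at hw
    exact (mem_support_rotate_iff c x hx).mp (c'.support_dropUntil_subset_support hy' hw)

theorem exists_eq_cons_concat {p : G.Walk x y} (hp : 2 ≤ p.length) :
    ∃ (a b : V) (ha : G.Adj x a) (r : G.Walk a b) (hb : G.Adj b y), p = cons ha (r.concat hb) := by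
  cases p with
  | nil => simp at hp
  | cons ha r =>
    have hr : ¬ r.Nil := not_nil_iff_lt_length.mpr (by rw [length_cons] at hp; omega)
    exact ⟨_, _, ha, r.dropLast, r.adj_penultimate hr, by rw [concat_dropLast]⟩

theorem IsPath.exists_isPath_first_mem {s : Set V} {p : G.Walk u v} (hp : p.IsPath) (hv : v ∈ s) :
    ∃ y ∈ s, ∃ q : G.Walk u y, q.IsPath ∧ q.support ⊆ p.support ∧
      ∀ w ∈ q.support, w ∈ s → w = y := by
  induction p with
  | nil => exact ⟨_, hv, Walk.nil, by simp, by simp, by simp⟩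
  | @cons u' c v' h p ih =>
    by_cases hu : u' ∈ s
    · exact ⟨u', hu, Walk.nil, by simp, by simp, by simp⟩
    obtain ⟨y, hy, q, hq, hqp, hfirst⟩ := ih hp.of_cons hv
    have hu' : u' ∉ q.support := fun h' ↦ ((cons_isPath_iff _ _).mp hp).2 (hqp h')
    refine ⟨y, hy, cons h q, hq.cons hu', ?_, ?_⟩
    · simpa using List.subset_cons_of_subset _ hqp
    · intro w hw hws
      rcases List.mem_cons.mp (by simpa using hw) with rfl | hw
      · exact absurd hws hu
      · exact hfirst w hw hws

theorem IsPath.mem_support_dropLast_iff {p : G.Walk u v} (hp : p.IsPath) (hnil : ¬ p.Nil) :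
    w ∈ p.dropLast.support ↔ w ∈ p.support ∧ w ≠ v := by
  have hsupp := support_dropLast_concat hnil
  have hnodup := hp.support_nodup
  rw [← hsupp, List.nodup_append] at hnodup
  rw [← hsupp, List.mem_append, List.mem_singleton]
  constructor
  · intro hw
    exact ⟨Or.inl hw, fun h ↦ hnodup.2.2 _ hw _ (List.mem_singleton_self v) h⟩
  · rintro ⟨hw | rfl, hne⟩
    · exact hw
    · exact absurd rfl hne

end Walk

open Walk

theorem exists_isPath_of_connected_induce_compl_singleton {x u v : V}
    (h : (G.induce {x}ᶜ).Connected) (hu : u ≠ x) (hv : v ≠ x) :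
    ∃ p : G.Walk u v, p.IsPath ∧ x ∉ p.support := by
  classical
  obtain ⟨q, hq⟩ := (h.preconnected ⟨u, hu⟩ ⟨v, hv⟩).exists_isPath
  let p : G.Walk u v := q.map (Embedding.induce _).toHom
  have hsupp : p.support = q.support.map Subtype.val := Walk.support_map _ q
  refine ⟨p, hq.map Subtype.val_injective, fun hx ↦ ?_⟩
  obtain ⟨w, -, hw⟩ := List.mem_map.mp (hsupp ▸ hx)
  exact w.2 hw

open Finset in
theorem exists_adj_adj_ne [Fintype V] (hn : 3 ≤ Fintype.card V) (hconn : G.Connected)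
    (hdel : ∀ w, (G.induce {w}ᶜ).Connected) (v : V) :
    ∃ a b, a ≠ b ∧ G.Adj v a ∧ G.Adj v b := by
  classical
  have : Nontrivial V := Fintype.one_lt_card_iff_nontrivial.mp (by omega)
  obtain ⟨a, hva⟩ := hconn.preconnected.exists_adj_of_nontrivial v
  obtain ⟨w, -, hw⟩ := Finset.exists_mem_notMem_of_card_lt_card
    (Finset.card_le_two.trans_lt (by rw [Finset.card_univ]; omega) : #{v, a} < #Finset.univ)
  simp only [Finset.mem_insert, Finset.mem_singleton, not_or] at hw
  obtain ⟨q, -, haq⟩ := exists_isPath_of_connected_induce_compl_singleton (hdel a) hva.ne hw.2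
  have hq : ¬ q.Nil := not_nil_of_ne (Ne.symm hw.1)
  exact ⟨a, q.snd, fun h ↦ haq (h ▸ q.getVert_mem_support 1), hva, q.adj_snd hq⟩

theorem exists_isCycle [Fintype V] (hn : 3 ≤ Fintype.card V) (hconn : G.Connected)
    (hdel : ∀ w, (G.induce {w}ᶜ).Connected) :
    ∃ (v : V) (c : G.Walk v v), c.IsCycle := by
  obtain ⟨v⟩ := hconn.nonempty
  obtain ⟨a, b, hab, hva, hvb⟩ := exists_adj_adj_ne hn hconn hdel v
  obtain ⟨p, hp, hvp⟩ :=
    exists_isPath_of_connected_induce_compl_singleton (hdel v) hva.ne' hvb.ne'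
  have hpnil : ¬ p.Nil := not_nil_of_ne hab
  refine ⟨v, _, IsPath.isCycle_append_reverse (p := cons hva p) (q := hvb.toWalk)
    (hp.cons hvp) (by simp [hvb.ne]) (fun w _ hw ↦ by simpa using hw) (Or.inl ?_)⟩
  have := not_nil_iff_lt_length.mp hpnil
  rw [length_cons]
  omega

theorem exists_isCycle_forall_length_le [Fintype V] (h : ∃ (v : V) (c : G.Walk v v), c.IsCycle) :
    ∃ (v : V) (c : G.Walk v v), c.IsCycle ∧
      ∀ (w : V) (d : G.Walk w w), d.IsCycle → d.length ≤ c.length := by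
  let s := {n | ∃ (v : V) (c : G.Walk v v), c.IsCycle ∧ c.length = n}
  have hfin : s.Finite := (Set.finite_le_nat (Fintype.card V)).subset fun n ⟨_, c, hc, hn⟩ ↦ by
    simpa [← hn] using hc.support_nodup.length_le_card
  obtain ⟨v, c, hc⟩ := h
  obtain ⟨_, ⟨⟨v, c, hc, rfl⟩, hmax⟩⟩ := hfin.exists_maximal ⟨_, v, c, hc, rfl⟩
  exact ⟨v, c, hc, fun w d hd ↦ (le_total _ _).elim id (hmax ⟨w, d, hd, rfl⟩)⟩

theorem hasMinor_K23_of_isPath {x y : V} (P : Fin 3 → G.Walk x y) (hP : ∀ i, (P i).IsPath)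
    (hlen : ∀ i, 2 ≤ (P i).length) (hdisj : Pairwise fun i j ↦ (P i).InternallyDisjoint (P j)) :
    FOG.HasMinor G (completeBipartiteGraph (Fin 2) (Fin 3)) := by
  choose a b ha r hb hPr using fun i ↦ exists_eq_cons_concat (hlen i)
  have hsupp : ∀ i, (P i).support = x :: ((r i).support ++ [y]) := fun i ↦ by
    rw [hPr i]; simp [support_concat]
  have hnodup : ∀ i, (x :: ((r i).support ++ [y])).Nodup := fun i ↦ hsupp i ▸ (hP i).support_nodup
  have hx : ∀ i, x ∉ (r i).support ∧ x ≠ y := fun i ↦ by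
    simpa using (List.nodup_cons.mp (hnodup i)).1
  have hy : ∀ i, y ∉ (r i).support := fun i ↦ by
    simpa using List.disjoint_of_nodup_append (List.nodup_cons.mp (hnodup i)).2
  have hr : ∀ i j, i ≠ j → ∀ w ∈ (r i).support, w ∉ (r j).support := by
    intro i j hij w hwi hwj
    rcases hdisj hij w (by simp [hsupp, hwi]) (by simp [hsupp, hwj]) with rfl | rfl
    exacts [(hx i).1 hwi, hy i hwi]
  refine ⟨Sum.elim ![{x}, {y}] fun i ↦ {w | w ∈ (r i).support}, ?_, ?_, ?_, ?_⟩
  · rintro (i | i)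
    · fin_cases i
      exacts [⟨x, rfl⟩, ⟨y, rfl⟩]
    · exact ⟨a i, (r i).start_mem_support⟩
  · rintro (i | i)
    · fin_cases i <;> simp [connected_top]
    · exact (r i).connected_induce_support
  · rintro (i | i) (j | j) hij
    · fin_cases i <;> fin_cases j <;> simp [(hx 0).2, (hx 0).2.symm] at hij ⊢
    · fin_cases i <;> simp [hx, hy]
    · fin_cases j <;> simp [hx, hy]
    · exact Set.disjoint_left.mpr (hr i j (by simpa using hij))
  · rintro (i | i) (j | j) hadj
    · simp at hadj
    · fin_cases i
      exacts [⟨x, rfl, a j, (r j).start_mem_support, ha j⟩,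
        ⟨y, rfl, b j, (r j).end_mem_support, (hb j).symm⟩]
    · fin_cases j
      exacts [⟨a i, (r i).start_mem_support, x, rfl, (ha i).symm⟩,
        ⟨b i, (r i).end_mem_support, y, rfl, hb i⟩]
    · simp at hadj

theorem Walk.IsCycle.mem_support_of_forall_length_le (hconn : G.Connected)
    (hdel : ∀ v, (G.induce {v}ᶜ).Connected)
    (hK : ¬ FOG.HasMinor G (completeBipartiteGraph (Fin 2) (Fin 3)))
    {v : V} {c : G.Walk v v} (hc : c.IsCycle)
    (hmax : ∀ (w : V) (d : G.Walk w w), d.IsCycle → d.length ≤ c.length) (z : V) :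
    z ∈ c.support := by
  by_contra hz
  obtain ⟨⟨⟨u, x⟩, hux : G.Adj u x⟩, -, hu, hx⟩ :=
    (hconn.preconnected z v).some.exists_boundary_dart {w | w ∉ c.support} hz
      (by simp [c.start_mem_support])
  simp only [Set.mem_ofPred_eq, not_not] at hu hx
  obtain ⟨m, hm, hmx⟩ : ∃ m ∈ c.support, m ≠ x := by
    by_cases hvx : v = x
    · exact ⟨c.snd, c.getVert_mem_support 1, hvx ▸ (c.adj_snd hc.not_nil).ne'⟩
    · exact ⟨v, c.start_mem_support, hvx⟩
  obtain ⟨Q, hQ, hxQ⟩ := exists_isPath_of_connected_induce_compl_singleton (hdel x) hux.ne hmx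
  obtain ⟨y, hy, Q', hQ', hQ'Q, hfirst⟩ := hQ.exists_isPath_first_mem (s := {w | w ∈ c.support}) hm
  have hxy : x ≠ y := fun h ↦ hxQ (hQ'Q (h ▸ Q'.end_mem_support))
  obtain ⟨P₁, P₂, hP₁, hP₂, h₁₂, hlen, hP₁c, hP₂c⟩ := hc.exists_isPath_internallyDisjoint hx hy hxy
  let P₃ : G.Walk x y := cons hux.symm Q'
  have hP₃ : P₃.IsPath := hQ'.cons fun h ↦ hxQ (hQ'Q h)
  have hP₃len : 2 ≤ P₃.length := by
    have := not_nil_iff_lt_length.mp (not_nil_of_ne (p := Q') fun h ↦ hu (h ▸ hy))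
    simp only [P₃, length_cons]
    omega
  have hdisj : ∀ P : G.Walk x y, P.support ⊆ c.support → P.InternallyDisjoint P₃ := by
    intro P hP w hw hw₃
    rcases List.mem_cons.mp hw₃ with rfl | hw₃
    exacts [Or.inl rfl, Or.inr (hfirst w hw₃ (hP hw))]
  have h₁₃ := hdisj P₁ hP₁c
  have h₂₃ := hdisj P₂ hP₂c
  have hlen₁ := hmax _ _ (hP₁.isCycle_append_reverse hP₃ h₁₃ (Or.inr hP₃len))
  have hlen₂ := hmax _ _ (hP₂.isCycle_append_reverse hP₃ h₂₃ (Or.inr hP₃len))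
  simp only [length_append, length_reverse] at hlen₁ hlen₂
  have hP₁len : 2 ≤ P₁.length := by omega
  have hP₂len : 2 ≤ P₂.length := by omega
  refine hK (hasMinor_K23_of_isPath ![P₁, P₂, P₃] ?_ ?_ ?_)
  · intro i
    fin_cases i <;> assumption
  · intro i
    fin_cases i <;> assumption
  · intro i j hij
    fin_cases i <;> fin_cases j
    exacts [absurd rfl hij, h₁₂, h₁₃, h₁₂.symm, absurd rfl hij, h₂₃, h₁₃.symm, h₂₃.symm,
      absurd rfl hij]

end SimpleGraph

namespace FOG

open SimpleGraph Walk

variable {V : Type*} {G : SimpleGraph V}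

theorem isHam_of_connected_induce_compl_singleton [Fintype V] (hn : 3 ≤ Fintype.card V)
    (hconn : G.Connected) (hdel : ∀ v, (G.induce {v}ᶜ).Connected)
    (hK : ¬ HasMinor G (completeBipartiteGraph (Fin 2) (Fin 3))) : IsHam G := by
  obtain ⟨v, c, hc, hmax⟩ := exists_isCycle_forall_length_le (exists_isCycle hn hconn hdel)
  exact ⟨v, c, hc, hc.mem_support_of_forall_length_le hconn hdel hK hmax⟩

theorem IsHam.connected (h : IsHam G) : G.Connected := by
  classical
  obtain ⟨a, p, -, hall⟩ := h
  have : Nonempty V := ⟨a⟩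
  exact .mk fun u w ↦ ⟨(p.takeUntil u (hall u)).reverse.append (p.takeUntil w (hall w))⟩

theorem IsHam.connected_induce_compl_singleton (h : IsHam G) (v : V) :
    (G.induce {v}ᶜ).Connected := by
  classical
  obtain ⟨a, p, hp, hall⟩ := h
  let c := p.rotate v (hall v)
  have hc : c.IsCycle := hp.rotate (hall v)
  have hq : c.tail.IsPath := hc.isPath_tail
  have hqnil : ¬ c.tail.Nil := not_nil_of_ne (c.adj_snd hc.not_nil).ne'
  have hset : ({v}ᶜ : Set V) = {w | w ∈ c.tail.dropLast.support} := by
    ext w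
    have hw : w ∈ c.support := (mem_support_rotate_iff p v (hall v)).mpr (hall w)
    rw [← c.cons_tail_support, List.mem_cons] at hw
    rw [Set.mem_ofPred_eq, hq.mem_support_dropLast_iff hqnil, c.support_tail_of_not_nil hc.not_nil]
    simp only [Set.mem_compl_iff, Set.mem_singleton_iff]
    tauto
  rw [hset]
  exact c.tail.dropLast.connected_induce_support

end FOG

/-- An outerplanar graph on at least 3 vertices is 2-connected
(connected and still connected after removing any single vertex) if and only if
it is Hamiltonian. -/
theorem outerplanar_two_connected_iff_hamiltonian (V : Type) [Fintype V]
    (G : SimpleGraph V) (hn : 3 ≤ Fintype.card V) (houter : FOG.Outerplanar G) :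
    (G.Connected ∧ ∀ v : V, (G.induce ({v}ᶜ : Set V)).Connected) ↔ FOG.IsHam G :=
  ⟨fun ⟨hconn, hdel⟩ ↦ FOG.isHam_of_connected_induce_compl_singleton hn hconn hdel houter.2,
    fun h ↦ ⟨h.connected, h.connected_induce_compl_singleton⟩⟩
end
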